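/- arXiv:math/0407182 — 9 statements merged into one kernel-verified Lean document; each statement's English description precedes it below -/
import Mathlib

section
/- Let I be a σ-ideal on a Polish space X. The following are equivalent: (1) for every I-positive Borel set B ⊆ X and every Borel function f : B → 2^ω there is an I-positive Borel set C ⊆ B such that f restricted to C is continuous; (2) for every I-positive Borel set B ⊆ X and every countable collection {D_n : n ∈ ω} of Borel subsets of X there is an I-positive Borel set C ⊆ B such that every set D_n ∩ C is relatively open in C; (3) for every I-positive Borel set B ⊆ X, every Polish space Y, and every Borel function f : B → Y there is an I-positive Borel set C ⊆ B such that f restricted to C is continuous. -/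
/-!
The three properties are witnessed by the same set `C`. A function into a second countable
space is continuous on `C` as soon as the preimages of the countably many basic open sets are
relatively open in `C`; conversely, countably many Borel sets `D n` are coded by the Borel map
`x ↦ (x ∈ D n)ₙ` into `2^ω`, which is continuous on `C` exactly when every `D n ∩ C` is
relatively open in `C`.
-/

open Set TopologicalSpace

theorem MeasurableSet.inter_preimage_of_measurable_domRestrict {α β : Type*} [MeasurableSpace α]
    [MeasurableSpace β] {B : Set α} (hB : MeasurableSet B) {f : α → β}
    (hf : Measurable (B.domRestrict f)) {t : Set β} (ht : MeasurableSet t) :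
    MeasurableSet (B ∩ f ⁻¹' t) := by
  have h : B ∩ f ⁻¹' t = Subtype.val '' (B.domRestrict f ⁻¹' t) := by
    ext x
    simp [and_comm]
  exact h ▸ hB.subtype_image (hf ht)

theorem measurable_boolIndicator_pi {α ι : Type*} [MeasurableSpace α] {D : ι → Set α}
    (hD : ∀ i, MeasurableSet (D i)) : Measurable fun x i ↦ (D i).boolIndicator x :=
  measurable_pi_lambda _ fun i ↦
    measurable_to_bool (by simpa [preimage_boolIndicator_true] using hD i)

theorem ContinuousOn.exists_isOpen_inter_eq_of_boolIndicator {α ι : Type*}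
    [TopologicalSpace α] {D : ι → Set α} {C : Set α}
    (h : ContinuousOn (fun x i ↦ (D i).boolIndicator x) C) (i : ι) :
    ∃ U : Set α, IsOpen U ∧ D i ∩ C = U ∩ C := by
  have hopen : IsOpen ((fun g : ι → Bool ↦ g i) ⁻¹' {true}) :=
    (isOpen_discrete {true}).preimage (continuous_apply i)
  simpa [← preimage_comp, Function.comp_def, preimage_boolIndicator_true] using
    continuousOn_iff'.1 h _ hopen

theorem continuous_reading_of_names_tfae_general
    (X : Type) [TopologicalSpace X] [MeasurableSpace X]
    (I : Set (Set X)) :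
    [ (∀ B : Set X, MeasurableSet B → B ∉ I →
        ∀ f : X → (ℕ → Bool), Measurable (B.restrict f) →
          ∃ C : Set X, C ⊆ B ∧ MeasurableSet C ∧ C ∉ I ∧ ContinuousOn f C),
      (∀ B : Set X, MeasurableSet B → B ∉ I →
        ∀ D : ℕ → Set X, (∀ n, MeasurableSet (D n)) →
          ∃ C : Set X, C ⊆ B ∧ MeasurableSet C ∧ C ∉ I ∧
            ∀ n, ∃ U : Set X, IsOpen U ∧ D n ∩ C = U ∩ C),
      (∀ B : Set X, MeasurableSet B → B ∉ I →
        ∀ (Y : Type) [TopologicalSpace Y] [PolishSpace Y] [MeasurableSpace Y] [BorelSpace Y],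
        ∀ f : X → Y, Measurable (B.restrict f) →
          ∃ C : Set X, C ⊆ B ∧ MeasurableSet C ∧ C ∉ I ∧ ContinuousOn f C) ].TFAE := by
  tfae_have 3 → 1 := fun h3 B hB hBI ↦
    have : PolishSpace (ℕ → Bool) := {}
    h3 B hB hBI (ℕ → Bool)
  tfae_have 1 → 2 := by
    intro h1 B hB hBI D hD
    obtain ⟨C, hCB, hCm, hCI, hC⟩ :=
      h1 B hB hBI (fun x n ↦ (D n).boolIndicator x)
        ((measurable_boolIndicator_pi hD).comp measurable_subtype_coe)
    exact ⟨C, hCB, hCm, hCI, hC.exists_isOpen_inter_eq_of_boolIndicator⟩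
  tfae_have 2 → 3 := by
    intro h2 B hB hBI Y _ _ _ _ f hf
    obtain ⟨e, he⟩ := exists_seq_basis Y
    have hD n : MeasurableSet (B ∩ f ⁻¹' e n) :=
      hB.inter_preimage_of_measurable_domRestrict hf (he.isOpen (mem_range_self n)).measurableSet
    obtain ⟨C, hCB, hCm, hCI, hC⟩ := h2 B hB hBI _ hD
    refine ⟨C, hCB, hCm, hCI, he.continuousOn_iff.2 ?_⟩
    rintro _ ⟨n, rfl⟩
    simpa only [inter_comm B, inter_assoc, inter_eq_left.2 hCB] using hC n
  tfae_finish

/-- Claim (restatements of the continuous reading of names).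
Let `I` be a σ-ideal on a Polish space `X`. The following are equivalent:
(1) for every `I`-positive Borel `B ⊆ X` and every Borel `f : B → 2^ω` there is an
    `I`-positive Borel `C ⊆ B` with `f` continuous on `C`;
(2) for every `I`-positive Borel `B` and countably many Borel sets `D n` there is an
    `I`-positive Borel `C ⊆ B` such that each `D n ∩ C` is relatively open in `C`;
(3) as (1) but with an arbitrary Polish space `Y` as the target. -/
theorem continuous_reading_of_names_tfae
    (X : Type) [TopologicalSpace X] [PolishSpace X] [MeasurableSpace X] [BorelSpace X]
    (I : Set (Set X))
    (hI_mono : ∀ s t : Set X, s ⊆ t → t ∈ I → s ∈ I)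
    (hI_union : ∀ f : ℕ → Set X, (∀ n, f n ∈ I) → (⋃ n, f n) ∈ I) :
    [ (∀ B : Set X, MeasurableSet B → B ∉ I →
        ∀ f : X → (ℕ → Bool), Measurable (B.restrict f) →
          ∃ C : Set X, C ⊆ B ∧ MeasurableSet C ∧ C ∉ I ∧ ContinuousOn f C),
      (∀ B : Set X, MeasurableSet B → B ∉ I →
        ∀ D : ℕ → Set X, (∀ n, MeasurableSet (D n)) →
          ∃ C : Set X, C ⊆ B ∧ MeasurableSet C ∧ C ∉ I ∧
            ∀ n, ∃ U : Set X, IsOpen U ∧ D n ∩ C = U ∩ C),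
      (∀ B : Set X, MeasurableSet B → B ∉ I →
        ∀ (Y : Type) [TopologicalSpace Y] [PolishSpace Y] [MeasurableSpace Y] [BorelSpace Y],
        ∀ f : X → Y, Measurable (B.restrict f) →
          ∃ C : Set X, C ⊆ B ∧ MeasurableSet C ∧ C ∉ I ∧ ContinuousOn f C) ].TFAE :=
  continuous_reading_of_names_tfae_general X I
end

section
/- Let I be a σ-ideal on 2^ω, let a ⊆ 2^{<ω} be a set with π(a) ∉ I, and let B ⊆ π(a) be an I-positive G_δ set. Then there exists a set b ⊆ a such that π(b) = B. Moreover, if B = ⋂_n O_n with each O_n open, then b can be taken of the form b = ⋃_n a_n where each a_n ⊆ a is an antichain in 2^{<ω} (a set of pairwise incomparable sequences), every element of a_{n+1} extends an element of a_n, and B ⊆ ⋃_{t ∈ a_n}[t] ⊆ O_n, where [t] denotes the basic open subset of 2^ω determined by t. -/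
open Set

/-- The initial segment `r ↾ n` of a point of Cantor space, as a finite binary sequence. -/
def initSeg (r : ℕ → Bool) (n : ℕ) : List Bool := List.ofFn fun i : Fin n => r i

/-- `π(a) = {r ∈ 2^ω : r ↾ n ∈ a for infinitely many n}`. -/
def piSet (a : Set (List Bool)) : Set (ℕ → Bool) := {r | {n | initSeg r n ∈ a}.Infinite}

/-- The basic open subset `[t]` of `2^ω` determined by a finite binary sequence `t`. -/
def cyl (t : List Bool) : Set (ℕ → Bool) := {r | initSeg r t.length = t}

lemma initSeg_length (r : ℕ → Bool) (n : ℕ) : (initSeg r n).length = n := by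
  simp [initSeg]

lemma initSeg_eq_iff {r s : ℕ → Bool} {n : ℕ} :
    initSeg r n = initSeg s n ↔ ∀ i < n, r i = s i := by
  simp only [initSeg, List.ofFn_inj, funext_iff]
  exact ⟨fun h i hi => h ⟨i, hi⟩, fun h i => h i i.2⟩

lemma mem_cyl_initSeg {s r : ℕ → Bool} {m : ℕ} :
    s ∈ cyl (initSeg r m) ↔ ∀ i < m, s i = r i := by
  simp only [cyl, mem_setOf_eq, initSeg_length]
  exact initSeg_eq_iff

lemma self_mem_cyl (r : ℕ → Bool) (m : ℕ) : r ∈ cyl (initSeg r m) :=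
  mem_cyl_initSeg.2 fun _ _ => rfl

lemma initSeg_take {r : ℕ → Bool} {m m' : ℕ} (h : m ≤ m') :
    (initSeg r m').take m = initSeg r m := by
  apply List.ext_getElem <;> simp [initSeg, h, Nat.min_eq_left]

lemma initSeg_prefix {r : ℕ → Bool} {m m' : ℕ} (h : m ≤ m') :
    initSeg r m <+: initSeg r m' := by
  rw [List.prefix_iff_eq_take, initSeg_length]
  exact (initSeg_take h).symm

lemma prefix_initSeg {r s : ℕ → Bool} {p q : ℕ}
    (h : initSeg r p <+: initSeg s q) : p ≤ q ∧ ∀ i < p, r i = s i := by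
  have hl := h.length_le
  rw [initSeg_length, initSeg_length] at hl
  refine ⟨hl, ?_⟩
  have h2 := List.prefix_iff_eq_take.1 h
  rw [initSeg_length, initSeg_take hl] at h2
  exact initSeg_eq_iff.1 h2

lemma exists_cyl_subset {U : Set (ℕ → Bool)} (hU : IsOpen U) {r : ℕ → Bool} (hr : r ∈ U) :
    ∃ m, ∀ m' ≥ m, cyl (initSeg r m') ⊆ U := by
  obtain ⟨F, u, hu, hsub⟩ := isOpen_pi_iff.1 hU r hr
  refine ⟨(F.sup id) + 1, fun m' hm' s hs => hsub fun i hi => ?_⟩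
  have hiF : i ∈ F := hi
  have : s i = r i := mem_cyl_initSeg.1 hs i
    (lt_of_lt_of_le (Nat.lt_succ_of_le (Finset.le_sup (f := id) hiF)) hm')
  rw [this]; exact (hu i hiF).2

lemma piSet_exists_ge {a : Set (List Bool)} {r : ℕ → Bool} (hr : r ∈ piSet a) (N : ℕ) :
    ∃ m, N ≤ m ∧ initSeg r m ∈ a := by
  obtain ⟨m, hm, hlt⟩ := Set.Infinite.exists_gt hr N
  exact ⟨m, hlt.le, hm⟩

lemma nat_sInf_congr {S T : Set ℕ} {N : ℕ} (hST : ∀ m, m ≤ N → (m ∈ S ↔ m ∈ T))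
    (hS : S.Nonempty) (hSN : sInf S ≤ N) : sInf T = sInf S := by
  have h1 : sInf S ∈ T := (hST _ hSN).1 (Nat.sInf_mem hS)
  have h2 : sInf T ≤ sInf S := Nat.sInf_le h1
  exact le_antisymm h2 (Nat.sInf_le ((hST _ (h2.trans hSN)).2 (Nat.sInf_mem ⟨_, h1⟩)))

/-- The recursively defined sequence of lengths used in the construction. -/
noncomputable def auxL (a : Set (List Bool)) (O' : ℕ → Set (ℕ → Bool)) (r : ℕ → Bool) : ℕ → ℕ
  | 0 => sInf {m | initSeg r m ∈ a ∧ cyl (initSeg r m) ⊆ O' 0}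
  | n+1 => sInf {m | auxL a O' r n < m ∧ initSeg r m ∈ a ∧ cyl (initSeg r m) ⊆ O' (n+1)}

lemma main_aux (a : Set (List Bool)) (B : Set (ℕ → Bool)) (hBa : B ⊆ piSet a)
    (O : ℕ → Set (ℕ → Bool)) (hO : ∀ n, IsOpen (O n)) (hBO : B = ⋂ n, O n) :
    ∃ an : ℕ → Set (List Bool),
      (∀ n, an n ⊆ a) ∧
      (∀ n, ∀ s ∈ an n, ∀ t ∈ an n, s ≠ t → ¬ s <+: t) ∧
      (∀ n, ∀ v ∈ an (n + 1), ∃ u ∈ an n, u <+: v) ∧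
      (∀ n, B ⊆ ⋃ t ∈ an n, cyl t) ∧
      (∀ n, (⋃ t ∈ an n, cyl t) ⊆ O n) ∧
      piSet (⋃ n, an n) = B := by
  classical
  set O' : ℕ → Set (ℕ → Bool) := fun n => ⋂ k ∈ Finset.range (n+1), O k with hO'def
  have hO'open : ∀ n, IsOpen (O' n) := fun n => isOpen_biInter_finset (fun k _ => hO k)
  have hBO' : ∀ n, B ⊆ O' n := by
    intro n r hr
    have hr' : r ∈ ⋂ n, O n := hBO ▸ hr
    exact mem_iInter₂.2 fun k _ => mem_iInter.1 hr' k
  have hO'sub : ∀ {k n : ℕ}, k ≤ n → O' n ⊆ O k := fun {k n} hk =>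
    biInter_subset_of_mem (Finset.mem_range.2 (Nat.lt_succ_of_le hk))
  set L := auxL a O' with hL
  -- existence of arbitrarily large good lengths
  have hEx : ∀ r ∈ B, ∀ n N : ℕ, ∃ m, N ≤ m ∧ initSeg r m ∈ a ∧ cyl (initSeg r m) ⊆ O' n := by
    intro r hr n N
    obtain ⟨m₀, hm₀⟩ := exists_cyl_subset (hO'open n) (hBO' n hr)
    obtain ⟨m, hm, hma⟩ := piSet_exists_ge (hBa hr) (max N m₀)
    exact ⟨m, le_trans (le_max_left _ _) hm, hma, hm₀ m (le_trans (le_max_right _ _) hm)⟩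
  have hNE0 : ∀ r ∈ B, {m | initSeg r m ∈ a ∧ cyl (initSeg r m) ⊆ O' 0}.Nonempty := by
    intro r hr
    obtain ⟨m, _, h⟩ := hEx r hr 0 0
    exact ⟨m, h⟩
  have hNES : ∀ r ∈ B, ∀ n,
      {m | L r n < m ∧ initSeg r m ∈ a ∧ cyl (initSeg r m) ⊆ O' (n+1)}.Nonempty := by
    intro r hr n
    obtain ⟨m, hm, h⟩ := hEx r hr (n+1) (L r n + 1)
    exact ⟨m, hm, h⟩
  have hQ : ∀ r ∈ B, ∀ n, initSeg r (L r n) ∈ a ∧ cyl (initSeg r (L r n)) ⊆ O' n := by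
    intro r hr n
    cases n with
    | zero => exact Nat.sInf_mem (hNE0 r hr)
    | succ k => exact (Nat.sInf_mem (hNES r hr k)).2
  have hLlt : ∀ r ∈ B, ∀ n, L r n < L r (n+1) := by
    intro r hr n
    exact (Nat.sInf_mem (hNES r hr n)).1
  have hLmono : ∀ r ∈ B, ∀ {j n : ℕ}, j ≤ n → L r j ≤ L r n := by
    intro r hr j n hjn
    exact (strictMono_nat_of_lt_succ (hLlt r hr)).monotone hjn
  have hLge : ∀ r ∈ B, ∀ n, n ≤ L r n := by
    intro r hr n
    induction n with
    | zero => exact Nat.zero_le _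
    | succ k ih => exact Nat.lt_of_le_of_lt ih (hLlt r hr k)
  -- locality of L
  have hloc : ∀ r ∈ B, ∀ s : ℕ → Bool, ∀ n : ℕ, (∀ i < L r n, s i = r i) →
      ∀ j ≤ n, L s j = L r j := by
    intro r hr s n hagree j hj
    induction j with
    | zero =>
      refine nat_sInf_congr (N := L r n) ?_ (hNE0 r hr) (hLmono r hr (Nat.zero_le n))
      intro m hm
      have : initSeg s m = initSeg r m :=
        initSeg_eq_iff.2 fun i hi => hagree i (lt_of_lt_of_le hi hm)
      rw [Set.mem_setOf_eq, Set.mem_setOf_eq, this]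
    | succ k ih =>
      have hk : k ≤ n := Nat.le_of_succ_le hj
      have hLk : L s k = L r k := ih hk
      have heq : L s (k+1) =
          sInf {m | L s k < m ∧ initSeg s m ∈ a ∧ cyl (initSeg s m) ⊆ O' (k+1)} := rfl
      have heqr : L r (k+1) =
          sInf {m | L r k < m ∧ initSeg r m ∈ a ∧ cyl (initSeg r m) ⊆ O' (k+1)} := rfl
      rw [heq, heqr]
      refine nat_sInf_congr (N := L r n) ?_ (hNES r hr k) ?_
      · intro m hm
        have : initSeg s m = initSeg r m :=
          initSeg_eq_iff.2 fun i hi => hagree i (lt_of_lt_of_le hi hm)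
        rw [Set.mem_setOf_eq, Set.mem_setOf_eq, this, hLk]
      · exact le_trans (le_of_eq heqr.symm) (hLmono r hr hj)
  refine ⟨fun n => {t | ∃ r, r ∈ B ∧ t = initSeg r (L r n)}, ?_, ?_, ?_, ?_, ?_, ?_⟩
  · rintro n t ⟨r, hr, rfl⟩
    exact (hQ r hr n).1
  · rintro n s ⟨r, hr, rfl⟩ t ⟨r', hr', rfl⟩ hne hpre
    obtain ⟨hle, hag⟩ := prefix_initSeg hpre
    have : L r' n = L r n := hloc r hr r' n (fun i hi => (hag i hi).symm) n le_rfl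
    apply hne
    rw [this]
    exact initSeg_eq_iff.2 hag
  · rintro n v ⟨r, hr, rfl⟩
    exact ⟨initSeg r (L r n), ⟨r, hr, rfl⟩, initSeg_prefix (le_of_lt (hLlt r hr n))⟩
  · intro n r hr
    exact mem_iUnion₂.2 ⟨initSeg r (L r n), ⟨r, hr, rfl⟩, self_mem_cyl r _⟩
  · intro n s hs
    obtain ⟨t, ht, hst⟩ := mem_iUnion₂.1 hs
    obtain ⟨r, hr, rfl⟩ := ht
    exact hO'sub le_rfl ((hQ r hr n).2 hst)
  · ext r
    constructor
    · -- r has infinitely many initial segments in b ⟹ r ∈ B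
      intro hrpi
      have hM : {m | initSeg r m ∈ ⋃ n, {t | ∃ r', r' ∈ B ∧ t = initSeg r' (L r' n)}}.Infinite := hrpi
      rw [hBO]
      refine mem_iInter.2 fun k => ?_
      -- find n ≥ k and m with initSeg r m ∈ an n
      by_contra hrk
      -- first: for each n, the set of m with initSeg r m ∈ an n is a subsingleton
      have hsub : ∀ n, {m | initSeg r m ∈ {t | ∃ r', r' ∈ B ∧ t = initSeg r' (L r' n)}}.Subsingleton := by
        intro n m hm m' hm'
        by_contra hne
        rcases Nat.lt_or_ge m m' with h | h
        · obtain ⟨r1, hr1, he1⟩ := hm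
          obtain ⟨r2, hr2, he2⟩ := hm'
          have hpre : initSeg r m <+: initSeg r m' := initSeg_prefix (le_of_lt h)
          have hne' : initSeg r m ≠ initSeg r m' := by
            intro he
            apply hne
            have := congrArg List.length he
            rwa [initSeg_length, initSeg_length] at this
          -- antichain violation within an n
          rw [he1, he2] at hpre hne'
          obtain ⟨hle, hag⟩ := prefix_initSeg hpre
          have : L r2 n = L r1 n := hloc r1 hr1 r2 n (fun i hi => (hag i hi).symm) n le_rfl
          apply hne'
          rw [this]
          exact initSeg_eq_iff.2 hag
        · rcases Nat.lt_or_ge m' m with h' | h'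
          · obtain ⟨r1, hr1, he1⟩ := hm'
            obtain ⟨r2, hr2, he2⟩ := hm
            have hpre : initSeg r m' <+: initSeg r m := initSeg_prefix (le_of_lt h')
            have hne' : initSeg r m' ≠ initSeg r m := by
              intro he
              apply hne
              have := congrArg List.length he
              rw [initSeg_length, initSeg_length] at this
              exact this.symm
            rw [he1, he2] at hpre hne'
            obtain ⟨hle, hag⟩ := prefix_initSeg hpre
            have : L r2 n = L r1 n := hloc r1 hr1 r2 n (fun i hi => (hag i hi).symm) n le_rfl
            apply hne'
            rw [this]
            exact initSeg_eq_iff.2 hag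
          · exact hne (le_antisymm h' h)
      -- every witnessing n is < k (otherwise we're done)
      have hall : ∀ m ∈ {m | initSeg r m ∈ ⋃ n, {t | ∃ r', r' ∈ B ∧ t = initSeg r' (L r' n)}},
          ∃ n < k, initSeg r m ∈ {t | ∃ r', r' ∈ B ∧ t = initSeg r' (L r' n)} := by
        intro m hm
        obtain ⟨s, ⟨n, rfl⟩, hms⟩ := hm
        refine ⟨n, ?_, hms⟩
        by_contra hnk
        push_neg at hnk
        apply hrk
        obtain ⟨r', hr', he⟩ := hms
        have : r ∈ cyl (initSeg r' (L r' n)) := he ▸ self_mem_cyl r m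
        exact hO'sub hnk ((hQ r' hr' n).2 this)
      have hfin : {m | initSeg r m ∈ ⋃ n, {t | ∃ r', r' ∈ B ∧ t = initSeg r' (L r' n)}}.Finite := by
        refine Set.Finite.subset (Set.Finite.biUnion (Finset.range k).finite_toSet
          (fun n _ => ((hsub n).finite))) ?_
        intro m hm
        obtain ⟨n, hnk, hmn⟩ := hall m hm
        exact mem_iUnion₂.2 ⟨n, Finset.mem_coe.2 (Finset.mem_range.2 hnk), hmn⟩
      exact hM hfin
    · -- r ∈ B ⟹ infinitely many initial segments in b
      intro hr
      refine Set.infinite_of_injective_forall_mem (f := fun n => L r n)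
        (strictMono_nat_of_lt_succ (hLlt r hr)).injective ?_
      intro n
      exact mem_iUnion.2 ⟨n, ⟨r, hr, rfl⟩⟩

/-- Let `I` be a σ-ideal on `2^ω`, let `a ⊆ 2^{<ω}` be a set with `π(a) ∉ I`, and let
`B ⊆ π(a)` be an `I`-positive `G_δ` set. Then there is `b ⊆ a` with `π(b) = B`; moreover,
if `B = ⋂ₙ Oₙ` with each `Oₙ` open, then `b` can be taken of the form `b = ⋃ₙ aₙ` where
each `aₙ ⊆ a` is an antichain of `2^{<ω}`, every element of `a_{n+1}` extends an element
of `aₙ`, and `B ⊆ ⋃_{t ∈ aₙ} [t] ⊆ Oₙ`. -/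
theorem exists_subset_piSet_eq
    (I : Set (Set (ℕ → Bool)))
    (hI_mono : ∀ s t : Set (ℕ → Bool), s ⊆ t → t ∈ I → s ∈ I)
    (hI_union : ∀ f : ℕ → Set (ℕ → Bool), (∀ n, f n ∈ I) → (⋃ n, f n) ∈ I)
    (a : Set (List Bool)) (ha : piSet a ∉ I)
    (B : Set (ℕ → Bool)) (hBa : B ⊆ piSet a) (hBpos : B ∉ I) (hBGδ : IsGδ B) :
    (∃ b ⊆ a, piSet b = B) ∧
    (∀ O : ℕ → Set (ℕ → Bool), (∀ n, IsOpen (O n)) → B = ⋂ n, O n →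
      ∃ an : ℕ → Set (List Bool),
        (∀ n, an n ⊆ a) ∧
        (∀ n, ∀ s ∈ an n, ∀ t ∈ an n, s ≠ t → ¬ s <+: t) ∧
        (∀ n, ∀ v ∈ an (n + 1), ∃ u ∈ an n, u <+: v) ∧
        (∀ n, B ⊆ ⋃ t ∈ an n, cyl t) ∧
        (∀ n, (⋃ t ∈ an n, cyl t) ⊆ O n) ∧
        piSet (⋃ n, an n) = B) := by
  constructor
  · obtain ⟨O, hO, hBO⟩ := hBGδ.eq_iInter_nat
    obtain ⟨an, h1, _, _, _, _, h6⟩ := main_aux a B hBa O hO hBO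
    exact ⟨⋃ n, an n, iUnion_subset h1, h6⟩
  · intro O hO hBO
    exact main_aux a B hBa O hO hBO
end

section
/- Let T ⊆ ω^{<ω} be a Laver tree, (Y,e) a compact metric space, and f : [T] → Y a Borel function. Then there is a Laver tree S ⊆ T with the same stem as T such that f restricted to [S] is Lipschitz with constant 2 from the least-difference metric d to e; more precisely, for all branches r_0, r_1 ∈ [S] and every n ∈ ω, if r_0 and r_1 agree on their first n+1 coordinates then e(f(r_0), f(r_1)) ≤ 2^{-n}. -/
open Set

/-- The initial segment `r ↾ n` of a point of Baire space, as a finite sequence. -/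
def seqTake (r : ℕ → ℕ) (n : ℕ) : List ℕ := List.ofFn fun i : Fin n => r i

/-- `[T]`, the set of infinite branches of a tree `T ⊆ ω^{<ω}`. -/
def branches (T : Set (List ℕ)) : Set (ℕ → ℕ) := {r | ∀ n, seqTake r n ∈ T}

/-- `T` is a Laver tree with stem `s`: `T` is closed under initial segments, `s ∈ T` is
comparable with every element of `T`, and every `t ∈ T` extending `s` has infinitely many
immediate successors in `T`. -/
def IsLaverTreeWithStem (T : Set (List ℕ)) (s : List ℕ) : Prop :=
  s ∈ T ∧ (∀ t ∈ T, ∀ u : List ℕ, u <+: t → u ∈ T) ∧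
    (∀ t ∈ T, t <+: s ∨ s <+: t) ∧
    (∀ t ∈ T, s <+: t → {n : ℕ | t ++ [n] ∈ T}.Infinite)

/-!
Call `A ⊆ ω^ω` *pure Ramsey* if every Laver tree has a Laver subtree with the same stem all of
whose branches lie in `A` or all outside `A`. Pure decision reduces this to finding such a
subtree with *some* stem. With a fusion argument this shows that pure Ramsey sets form a
σ-algebra; it contains the basic open sets, hence all Borel sets. For `f` as in the theorem,
covering the compact space `Y` by finitely many balls of radius `2⁻ᵐ⁻¹` and deciding their
preimages shrinks any Laver tree, keeping its stem, to one whose branches have `f`-images within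
`2⁻ᵐ` of each other; fusing these shrinkings over the levels `m ≥ |s|` gives the Lipschitz tree.
-/

@[simp] lemma length_seqTake (r : ℕ → ℕ) (n : ℕ) : (seqTake r n).length = n :=
  List.length_ofFn

@[simp] lemma getElem_seqTake (r : ℕ → ℕ) {n i : ℕ} (h : i < (seqTake r n).length) :
    (seqTake r n)[i] = r i := by
  simp [seqTake]

lemma seqTake_prefix_seqTake (r : ℕ → ℕ) {m n : ℕ} (h : m ≤ n) :
    seqTake r m <+: seqTake r n := by
  rw [List.prefix_iff_eq_take]
  exact List.ext_getElem (by simp [h]) fun i _ _ => by simp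

lemma seqTake_eq_seqTake {r r' : ℕ → ℕ} {n : ℕ} (h : ∀ i < n, r i = r' i) :
    seqTake r n = seqTake r' n :=
  List.ofFn_inj.2 (funext fun i => h i i.2)

lemma eq_seqTake_of_prefix {u : List ℕ} {r : ℕ → ℕ} {n : ℕ} (h : u <+: seqTake r n) :
    u = seqTake r u.length :=
  (List.prefix_of_prefix_length_le h (seqTake_prefix_seqTake r (by simpa using h.length_le))
    (by simp)).eq_of_length (by simp)

lemma branches_mono {S T : Set (List ℕ)} (h : S ⊆ T) : branches S ⊆ branches T :=
  fun _ hr n => h (hr n)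

namespace IsLaverTreeWithStem

variable {T S : Set (List ℕ)} {s t u : List ℕ}

lemma stem_mem (hT : IsLaverTreeWithStem T s) : s ∈ T := hT.1

lemma mem_of_prefix (hT : IsLaverTreeWithStem T s) (ht : t ∈ T) (hut : u <+: t) : u ∈ T :=
  hT.2.1 t ht u hut

lemma prefix_or_prefix (hT : IsLaverTreeWithStem T s) (ht : t ∈ T) : t <+: s ∨ s <+: t :=
  hT.2.2.1 t ht

lemma infinite_succ (hT : IsLaverTreeWithStem T s) (ht : t ∈ T) (hst : s <+: t) :
    {n : ℕ | t ++ [n] ∈ T}.Infinite :=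
  hT.2.2.2 t ht hst

lemma stem_prefix_of_length_le (hT : IsLaverTreeWithStem T s) (ht : t ∈ T)
    (hl : s.length ≤ t.length) : s <+: t :=
  (hT.prefix_or_prefix ht).elim
    (fun h => (h.eq_of_length (le_antisymm h.length_le hl)) ▸ List.prefix_rfl) id

lemma seqTake_eq_stem (hT : IsLaverTreeWithStem T s) {r : ℕ → ℕ} (hr : r ∈ branches T) :
    seqTake r s.length = s :=
  ((hT.stem_prefix_of_length_le (hr _) (by simp)).eq_of_length (by simp)).symm

/-- A branching node strictly below `s` would put two incomparable nodes into `T`. -/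
lemma stem_prefix_of_subset (hS : IsLaverTreeWithStem S t) (hT : IsLaverTreeWithStem T s)
    (hST : S ⊆ T) : s <+: t := by
  refine (hT.prefix_or_prefix (hST hS.stem_mem)).elim (fun hts => ?_) id
  by_contra hst
  have hlt : t.length < s.length :=
    lt_of_le_of_ne hts.length_le fun h => hst (hts.eq_of_length h ▸ List.prefix_rfl)
  refine hS.infinite_succ hS.stem_mem List.prefix_rfl (Set.Subsingleton.finite ?_)
  intro k hk l hl
  have key : ∀ m ∈ {n : ℕ | t ++ [n] ∈ S}, t ++ [m] <+: s := fun m hm =>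
    (hT.prefix_or_prefix (hST hm)).elim id fun h =>
      (h.eq_of_length (le_antisymm h.length_le (by simpa using hlt))) ▸ List.prefix_rfl
  simpa using List.prefix_of_prefix_length_le (key k hk) (key l hl) (by simp)

end IsLaverTreeWithStem

def subtreeAt (T : Set (List ℕ)) (t : List ℕ) : Set (List ℕ) :=
  {u ∈ T | u <+: t ∨ t <+: u}

lemma subtreeAt_subset (T : Set (List ℕ)) (t : List ℕ) : subtreeAt T t ⊆ T :=
  fun _ h => h.1

lemma IsLaverTreeWithStem.subtreeAt {T : Set (List ℕ)} {s t : List ℕ}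
    (hT : IsLaverTreeWithStem T s) (ht : t ∈ T) (hst : s <+: t) :
    IsLaverTreeWithStem (subtreeAt T t) t := by
  refine ⟨⟨ht, Or.inl List.prefix_rfl⟩, ?_, fun u hu => hu.2, ?_⟩
  · rintro u ⟨huT, hu⟩ w hw
    refine ⟨hT.mem_of_prefix huT hw, ?_⟩
    rcases hu with hu | hu
    · exact Or.inl (hw.trans hu)
    · exact List.prefix_or_prefix_of_prefix hw hu
  · rintro u ⟨huT, -⟩ htu
    exact (hT.infinite_succ huT (hst.trans htu)).mono fun k hk =>
      ⟨hk, Or.inr (htu.trans (List.prefix_append _ _))⟩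

def amalgam (t : List ℕ) (I : Set ℕ) (S : ℕ → Set (List ℕ)) : Set (List ℕ) :=
  {v | v <+: t} ∪ ⋃ k ∈ I, S k

section Amalgam

variable {t : List ℕ} {I : Set ℕ} {S : ℕ → Set (List ℕ)}

lemma mem_amalgam_cases (hS : ∀ k ∈ I, IsLaverTreeWithStem (S k) (t ++ [k]))
    {u : List ℕ} (hu : u ∈ amalgam t I S) :
    u <+: t ∨ ∃ k ∈ I, u ∈ S k ∧ t ++ [k] <+: u := by
  rcases hu with hu | hu
  · exact Or.inl hu
  obtain ⟨k, hk, huk⟩ := mem_iUnion₂.1 hu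
  rcases (hS k hk).prefix_or_prefix huk with h | h
  · rcases List.prefix_concat_iff.1 h with rfl | h
    · exact Or.inr ⟨k, hk, huk, List.prefix_rfl⟩
    · exact Or.inl h
  · exact Or.inr ⟨k, hk, huk, h⟩

lemma amalgam_subset {T : Set (List ℕ)} (hS : ∀ k ∈ I, IsLaverTreeWithStem (S k) (t ++ [k]))
    (hI : I.Nonempty) (hST : ∀ k ∈ I, S k ⊆ T) : amalgam t I S ⊆ T := by
  obtain ⟨k, hk⟩ := hI
  rintro u (hu | hu)
  · exact hST k hk
      ((hS k hk).mem_of_prefix (hS k hk).stem_mem (hu.trans (List.prefix_append _ _)))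
  · obtain ⟨k, hk, huk⟩ := mem_iUnion₂.1 hu
    exact hST k hk huk

lemma isLaverTreeWithStem_amalgam (hS : ∀ k ∈ I, IsLaverTreeWithStem (S k) (t ++ [k]))
    (hI : I.Infinite) : IsLaverTreeWithStem (amalgam t I S) t := by
  refine ⟨Or.inl List.prefix_rfl, ?_, ?_, ?_⟩
  · rintro u (hu | hu) w hw
    · exact Or.inl (hw.trans hu)
    · obtain ⟨k, hk, huk⟩ := mem_iUnion₂.1 hu
      exact Or.inr (mem_iUnion₂.2 ⟨k, hk, (hS k hk).mem_of_prefix huk hw⟩)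
  · intro u hu
    rcases mem_amalgam_cases hS hu with h | ⟨k, -, -, h⟩
    · exact Or.inl h
    · exact Or.inr ((List.prefix_append _ _).trans h)
  · intro u hu htu
    rcases mem_amalgam_cases hS hu with h | ⟨k, hk, huk, h⟩
    · obtain rfl : u = t := h.eq_of_length (le_antisymm h.length_le htu.length_le)
      exact hI.mono fun k hk => Or.inr (mem_iUnion₂.2 ⟨k, hk, (hS k hk).stem_mem⟩)
    · exact ((hS k hk).infinite_succ huk h).mono fun m hm => Or.inr (mem_iUnion₂.2 ⟨k, hk, hm⟩)

lemma branches_amalgam_subset (hS : ∀ k ∈ I, IsLaverTreeWithStem (S k) (t ++ [k])) :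
    branches (amalgam t I S) ⊆ ⋃ k ∈ I, branches (S k) := by
  intro r hr
  have hnode : ∀ n, t.length < n →
      ∃ k ∈ I, seqTake r n ∈ S k ∧ seqTake r (t.length + 1) = t ++ [k] := by
    intro n hn
    rcases mem_amalgam_cases hS (hr n) with h | ⟨k, hk, hrk, h⟩
    · exact absurd h.length_le (by simpa using hn)
    · refine ⟨k, hk, hrk, ?_⟩
      simpa using (eq_seqTake_of_prefix h).symm
  obtain ⟨k, hk, -, hrk⟩ := hnode (t.length + 1) (by omega)
  refine mem_iUnion₂.2 ⟨k, hk, fun n => ?_⟩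
  obtain ⟨k', -, hrk', hr'⟩ := hnode (max n (t.length + 1)) (by omega)
  obtain rfl : k' = k := by simpa using hr'.symm.trans hrk
  exact (hS k' hk).mem_of_prefix hrk' (seqTake_prefix_seqTake r (le_max_left _ _))

lemma exists_subset_branches_subset_of_infinite {T : Set (List ℕ)} {Z : Set (ℕ → ℕ)}
    (hI : {k | ∃ S, IsLaverTreeWithStem S (t ++ [k]) ∧ S ⊆ T ∧ branches S ⊆ Z}.Infinite) :
    ∃ S, IsLaverTreeWithStem S t ∧ S ⊆ T ∧ branches S ⊆ Z := by
  choose! S hS using fun k (hk : k ∈ {k | ∃ S, IsLaverTreeWithStem S (t ++ [k]) ∧ S ⊆ T ∧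
    branches S ⊆ Z}) => hk
  have hSt : ∀ k ∈ _, IsLaverTreeWithStem (S k) (t ++ [k]) := fun k hk => (hS k hk).1
  exact ⟨amalgam t _ S, isLaverTreeWithStem_amalgam hSt hI,
    amalgam_subset hSt hI.nonempty fun k hk => (hS k hk).2.1,
    (branches_amalgam_subset hSt).trans (iUnion₂_subset fun k hk => (hS k hk).2.2)⟩

end Amalgam

def pruned (T : Set (List ℕ)) (s : List ℕ) (P : List ℕ → Prop) : Set (List ℕ) :=
  {t ∈ T | ∀ w, s <+: w → w <+: t → P w}

lemma pruned_subset (T : Set (List ℕ)) (s : List ℕ) (P : List ℕ → Prop) : pruned T s P ⊆ T :=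
  fun _ h => h.1

lemma IsLaverTreeWithStem.pruned {T : Set (List ℕ)} {s : List ℕ} {P : List ℕ → Prop}
    (hT : IsLaverTreeWithStem T s) (hs : P s)
    (hP : ∀ t ∈ T, s <+: t → P t → {k | t ++ [k] ∈ T ∧ P (t ++ [k])}.Infinite) :
    IsLaverTreeWithStem (pruned T s P) s := by
  refine ⟨⟨hT.stem_mem, fun w h₁ h₂ => ?_⟩, fun t ht u hut => ?_, fun t ht =>
    hT.prefix_or_prefix ht.1, fun t ht hst => ?_⟩
  · rwa [h₂.eq_of_length (le_antisymm h₂.length_le h₁.length_le)]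
  · exact ⟨hT.mem_of_prefix ht.1 hut, fun w h₁ h₂ => ht.2 w h₁ (h₂.trans hut)⟩
  · refine (hP t ht.1 hst (ht.2 t hst List.prefix_rfl)).mono fun k hk => ⟨hk.1, ?_⟩
    intro w h₁ h₂
    rcases List.prefix_concat_iff.1 h₂ with rfl | h₂
    · exact hk.2
    · exact ht.2 w h₁ h₂

def graft (U : Set (List ℕ)) (L : ℕ) (c : List ℕ → Set (List ℕ)) : Set (List ℕ) :=
  {u ∈ U | u.length ≤ L} ∪ ⋃ t ∈ {t ∈ U | t.length = L}, c t

section Graft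

variable {U : Set (List ℕ)} {L : ℕ} {c : List ℕ → Set (List ℕ)}

@[simp] lemma mem_graft {u : List ℕ} :
    u ∈ graft U L c ↔ (u ∈ U ∧ u.length ≤ L) ∨ ∃ t, (t ∈ U ∧ t.length = L) ∧ u ∈ c t := by
  simp [graft]

lemma graft_subset (hc : ∀ t ∈ U, t.length = L → c t ⊆ U) : graft U L c ⊆ U := by
  rintro u (⟨hu, -⟩ | hu)
  · exact hu
  · obtain ⟨t, ⟨ht, hl⟩, hut⟩ := mem_iUnion₂.1 hu
    exact hc t ht hl hut

lemma mem_graft_of_length_le {u : List ℕ} (hu : u ∈ U) (hl : u.length ≤ L) :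
    u ∈ graft U L c :=
  Or.inl ⟨hu, hl⟩

variable (hc : ∀ t ∈ U, t.length = L → IsLaverTreeWithStem (c t) t ∧ c t ⊆ U)
include hc

lemma isLaverTreeWithStem_graft {s : List ℕ} (hU : IsLaverTreeWithStem U s)
    (hL : s.length ≤ L) : IsLaverTreeWithStem (graft U L c) s := by
  have hsub := graft_subset fun t ht hl => (hc t ht hl).2
  refine ⟨mem_graft_of_length_le hU.stem_mem hL, fun u hu w hw => ?_,
    fun u hu => hU.prefix_or_prefix (hsub hu), fun u hu hsu => ?_⟩
  · rcases mem_graft.1 hu with ⟨huU, hl⟩ | ⟨t, ⟨ht, hl⟩, hut⟩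
    · exact mem_graft_of_length_le (hU.mem_of_prefix huU hw) (hw.length_le.trans hl)
    · exact mem_graft.2 (Or.inr ⟨t, ⟨ht, hl⟩, (hc t ht hl).1.mem_of_prefix hut hw⟩)
  rcases lt_trichotomy u.length L with hlt | heq | hgt
  · exact (hU.infinite_succ (hsub hu) hsu).mono fun k hk =>
      mem_graft_of_length_le hk (by simpa using hlt)
  · have hcu := (hc u (hsub hu) heq).1
    exact (hcu.infinite_succ hcu.stem_mem List.prefix_rfl).mono fun k hk =>
      mem_graft.2 (Or.inr ⟨u, ⟨hsub hu, heq⟩, hk⟩)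
  · rcases mem_graft.1 hu with ⟨-, hl⟩ | ⟨t, ⟨ht, hl⟩, hut⟩
    · omega
    have hct := (hc t ht hl).1
    exact (hct.infinite_succ hut (hct.stem_prefix_of_length_le hut (by omega))).mono
      fun k hk => mem_graft.2 (Or.inr ⟨t, ⟨ht, hl⟩, hk⟩)

lemma mem_branches_of_mem_branches_graft {r : ℕ → ℕ} (hr : r ∈ branches (graft U L c)) :
    r ∈ branches (c (seqTake r L)) := by
  have hsub := graft_subset fun t ht hl => (hc t ht hl).2
  have hcr := (hc _ (hsub (hr L)) (length_seqTake r L)).1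
  intro n
  rcases le_or_gt n L with hn | hn
  · exact hcr.mem_of_prefix hcr.stem_mem (seqTake_prefix_seqTake r hn)
  rcases mem_graft.1 (hr n) with ⟨-, hl⟩ | ⟨t, ⟨ht, hl⟩, hrt⟩
  · simp at hl; omega
  have hct := (hc t ht hl).1
  have htr : t = seqTake r L := by
    simpa [hl] using eq_seqTake_of_prefix (hct.stem_prefix_of_length_le hrt (by simp; omega))
  exact htr ▸ hrt

end Graft

lemma isLaverTreeWithStem_iInter {T : ℕ → Set (List ℕ)} {s : List ℕ}
    (hT : ∀ n, IsLaverTreeWithStem (T n) s) (hanti : Antitone T)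
    (hstab : ∀ n, ∀ u ∈ T n, u.length ≤ s.length + n → u ∈ T (n + 1)) :
    IsLaverTreeWithStem (⋂ n, T n) s := by
  have hmem : ∀ n, ∀ u ∈ T n, u.length ≤ s.length + n → u ∈ ⋂ m, T m := by
    refine fun n u hu hl => mem_iInter.2 fun m => ?_
    rcases le_total m n with hmn | hnm
    · exact hanti hmn hu
    induction m, hnm using Nat.le_induction with
    | base => exact hu
    | succ m hnm ih => exact hstab m u ih (by omega)
  refine ⟨hmem 0 s (hT 0).stem_mem (by simp), fun t ht u hut => ?_,
    fun t ht => (hT 0).prefix_or_prefix (mem_iInter.1 ht 0), fun t ht hst => ?_⟩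
  · exact mem_iInter.2 fun n => (hT n).mem_of_prefix (mem_iInter.1 ht n) hut
  · exact ((hT (t.length + 1)).infinite_succ (mem_iInter.1 ht _) hst).mono fun k hk =>
      hmem _ _ hk (by simp)

theorem exists_fusion {T : Set (List ℕ)} {s : List ℕ} (hT : IsLaverTreeWithStem T s)
    (Q : ℕ → Set (ℕ → ℕ) → Prop) (hQ : ∀ n, Antitone (Q n))
    (hstep : ∀ n U t, IsLaverTreeWithStem U t → U ⊆ T → t.length = s.length + n →
      ∃ S, IsLaverTreeWithStem S t ∧ S ⊆ U ∧ Q n (branches S)) :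
    ∃ S, IsLaverTreeWithStem S s ∧ S ⊆ T ∧ ∀ n, ∀ r ∈ branches S,
      Q n {r' ∈ branches S | seqTake r' (s.length + n) = seqTake r (s.length + n)} := by
  have hchoice : ∀ n (U : Set (List ℕ)) t, ∃ S, IsLaverTreeWithStem U s → U ⊆ T → t ∈ U →
      t.length = s.length + n → IsLaverTreeWithStem S t ∧ S ⊆ U ∧ Q n (branches S) := by
    intro n U t
    by_cases h : IsLaverTreeWithStem U s ∧ U ⊆ T ∧ t ∈ U ∧ t.length = s.length + n
    · obtain ⟨hU, hUT, ht, hl⟩ := h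
      obtain ⟨S, hS, hSU, hQS⟩ := hstep n _ t
        (hU.subtreeAt ht (hU.stem_prefix_of_length_le ht (by omega)))
        ((subtreeAt_subset U t).trans hUT) hl
      exact ⟨S, fun _ _ _ _ => ⟨hS, hSU.trans (subtreeAt_subset U t), hQS⟩⟩
    · exact ⟨∅, fun hU hUT ht hl => absurd ⟨hU, hUT, ht, hl⟩ h⟩
  choose c hc using hchoice
  let F : ℕ → Set (List ℕ) := fun n => Nat.rec T (fun n U => graft U (s.length + n) (c n U)) n
  have hF : ∀ n, IsLaverTreeWithStem (F n) s ∧ F n ⊆ T := by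
    intro n
    induction n with
    | zero => exact ⟨hT, subset_rfl⟩
    | succ n ih =>
      have hcn := fun t ht hl => (hc n (F n) t ih.1 ih.2 ht hl).imp_right And.left
      exact ⟨isLaverTreeWithStem_graft hcn ih.1 (by omega),
        (graft_subset fun t ht hl => (hcn t ht hl).2).trans ih.2⟩
  have hcF : ∀ n, ∀ t ∈ F n, t.length = s.length + n →
      IsLaverTreeWithStem (c n (F n) t) t ∧ c n (F n) t ⊆ F n := fun n t ht hl =>
    (hc n (F n) t (hF n).1 (hF n).2 ht hl).imp_right And.left
  refine ⟨⋂ n, F n, isLaverTreeWithStem_iInter (fun n => (hF n).1)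
    (antitone_nat_of_succ_le fun n => graft_subset fun t ht hl => (hcF n t ht hl).2)
    (fun n u hu hl => mem_graft_of_length_le hu hl), iInter_subset F 0, fun n r hr => ?_⟩
  have hbr : ∀ r' ∈ branches (⋂ n, F n),
      r' ∈ branches (c n (F n) (seqTake r' (s.length + n))) := fun r' hr' =>
    mem_branches_of_mem_branches_graft (hcF n) (branches_mono (iInter_subset F (n + 1)) hr')
  refine hQ n (fun r' hr' => hr'.2 ▸ hbr r' hr'.1)
    (hc n (F n) _ (hF n).1 (hF n).2 (branches_mono (iInter_subset F n) hr _)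
      (length_seqTake _ _)).2.2

def Decides (S : Set (List ℕ)) (A : Set (ℕ → ℕ)) : Prop :=
  branches S ⊆ A ∨ branches S ⊆ Aᶜ

lemma Decides.mono {S S' : Set (List ℕ)} {A : Set (ℕ → ℕ)} (h : S ⊆ S') (hA : Decides S' A) :
    Decides S A :=
  hA.imp (branches_mono h).trans (branches_mono h).trans

lemma Decides.compl {S : Set (List ℕ)} {A : Set (ℕ → ℕ)} (hA : Decides S A) : Decides S Aᶜ := by
  rw [Decides, compl_compl]
  exact hA.symm

def IsLaverRamsey (A : Set (ℕ → ℕ)) : Prop :=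
  ∀ T s, IsLaverTreeWithStem T s → ∃ S t, IsLaverTreeWithStem S t ∧ S ⊆ T ∧ Decides S A

def IsLaverPureRamsey (A : Set (ℕ → ℕ)) : Prop :=
  ∀ T s, IsLaverTreeWithStem T s → ∃ S, IsLaverTreeWithStem S s ∧ S ⊆ T ∧ Decides S A

lemma exists_decides_of_infinite {T : Set (List ℕ)} {t : List ℕ} {A : Set (ℕ → ℕ)}
    (hI : {k | ∃ S, IsLaverTreeWithStem S (t ++ [k]) ∧ S ⊆ T ∧ Decides S A}.Infinite) :
    ∃ S, IsLaverTreeWithStem S t ∧ S ⊆ T ∧ Decides S A := by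
  have hsplit : {k | ∃ S, IsLaverTreeWithStem S (t ++ [k]) ∧ S ⊆ T ∧ branches S ⊆ A} ∪
      {k | ∃ S, IsLaverTreeWithStem S (t ++ [k]) ∧ S ⊆ T ∧ branches S ⊆ Aᶜ} =
      {k | ∃ S, IsLaverTreeWithStem S (t ++ [k]) ∧ S ⊆ T ∧ Decides S A} := by
    ext k
    simp only [mem_union, mem_ofPred_eq, Decides, and_or_left, exists_or]
  rcases Set.infinite_union.1 (hsplit ▸ hI) with h | h
  · obtain ⟨S, hS, hST, hSA⟩ := exists_subset_branches_subset_of_infinite h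
    exact ⟨S, hS, hST, Or.inl hSA⟩
  · obtain ⟨S, hS, hST, hSA⟩ := exists_subset_branches_subset_of_infinite h
    exact ⟨S, hS, hST, Or.inr hSA⟩

/-- Pure decision: if the stem `s` of `T` cannot be kept, the nodes above `s` at which it
cannot be kept form a Laver tree, which has a deciding subtree by `IsLaverRamsey`; the stem
of that subtree extends `s`, so it is such a node, a contradiction. -/
theorem IsLaverRamsey.isLaverPureRamsey {A : Set (ℕ → ℕ)} (hA : IsLaverRamsey A) :
    IsLaverPureRamsey A := by
  intro T s hT
  by_contra hs
  let Good t := ∃ S, IsLaverTreeWithStem S t ∧ S ⊆ T ∧ Decides S A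
  have hbad : ∀ t ∈ T, s <+: t → ¬Good t → {k | t ++ [k] ∈ T ∧ ¬Good (t ++ [k])}.Infinite := by
    intro t ht hst hgood hfin
    refine hgood (exists_decides_of_infinite (((hT.infinite_succ ht hst).sdiff hfin).mono ?_))
    intro k hk
    by_contra h
    exact hk.2 ⟨hk.1, h⟩
  have hB := hT.pruned hs hbad
  obtain ⟨S, t, hS, hSB, hSA⟩ := hA _ _ hB
  have hst := hS.stem_prefix_of_subset hB hSB
  exact (hSB hS.stem_mem).2 t hst List.prefix_rfl
    ⟨S, hS, hSB.trans (pruned_subset _ _ _), hSA⟩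

lemma isLaverRamsey_setOf_exists_seqTake_mem (W : Set (List ℕ)) :
    IsLaverRamsey {r | ∃ n, seqTake r n ∈ W} := by
  intro T s hT
  by_cases h : ∃ t ∈ T, s <+: t ∧ ∃ u ∈ W, u <+: t
  · obtain ⟨t, ht, hst, u, huW, hut⟩ := h
    have hTt := hT.subtreeAt ht hst
    refine ⟨_, t, hTt, subtreeAt_subset T t, Or.inl fun r hr => ⟨u.length, ?_⟩⟩
    rwa [← eq_seqTake_of_prefix (hTt.seqTake_eq_stem hr ▸ hut)]
  · refine ⟨T, s, hT, subset_rfl, Or.inr fun r hr ⟨n, hn⟩ => h ?_⟩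
    have hrT := hr (max n s.length)
    exact ⟨_, hrT, hT.stem_prefix_of_length_le hrT (by simp), _, hn,
      seqTake_prefix_seqTake r (le_max_left _ _)⟩

lemma isLaverRamsey_iUnion {A : ℕ → Set (ℕ → ℕ)} (hA : ∀ n, IsLaverPureRamsey (A n)) :
    IsLaverRamsey (⋃ n, A n) := by
  intro T s hT
  by_cases h : ∃ n S t, IsLaverTreeWithStem S t ∧ S ⊆ T ∧ branches S ⊆ A n
  · obtain ⟨n, S, t, hS, hST, hSA⟩ := h
    exact ⟨S, t, hS, hST, Or.inl (hSA.trans (subset_iUnion A n))⟩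
  push Not at h
  obtain ⟨S, hS, hST, hSA⟩ := exists_fusion hT (fun n B => B ⊆ (A n)ᶜ)
    (fun _ _ _ hB h => hB.trans h) fun n U t hU hUT _ => by
      obtain ⟨S, hS, hSU, hSA | hSA⟩ := hA n U t hU
      · exact absurd hSA (h n S t hS (hSU.trans hUT))
      · exact ⟨S, hS, hSU, hSA⟩
  refine ⟨S, s, hS, hST, Or.inr fun r hr hrA => ?_⟩
  obtain ⟨n, hn⟩ := mem_iUnion.1 hrA
  exact hSA n r hr ⟨hr, rfl⟩ hn

lemma isLaverPureRamsey_empty : IsLaverPureRamsey ∅ :=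
  fun T _ hT => ⟨T, hT, subset_rfl, Or.inr (by simp)⟩

lemma IsLaverPureRamsey.compl {A : Set (ℕ → ℕ)} (hA : IsLaverPureRamsey A) :
    IsLaverPureRamsey Aᶜ := fun T s hT => by
  obtain ⟨S, hS, hST, hSA⟩ := hA T s hT
  exact ⟨S, hS, hST, hSA.compl⟩

abbrev laverPureRamseyMeasurableSpace : MeasurableSpace (ℕ → ℕ) where
  MeasurableSet' := IsLaverPureRamsey
  measurableSet_empty := isLaverPureRamsey_empty
  measurableSet_compl _ := IsLaverPureRamsey.compl
  measurableSet_iUnion _ hA := (isLaverRamsey_iUnion hA).isLaverPureRamsey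

lemma isLaverPureRamsey_preimage_eval (i : ℕ) (B : Set ℕ) :
    IsLaverPureRamsey ((fun r : ℕ → ℕ => r i) ⁻¹' B) := by
  have h : (fun r : ℕ → ℕ => r i) ⁻¹' B =
      {r | ∃ n, seqTake r n ∈ {u : List ℕ | ∃ h : i < u.length, u[i] ∈ B}} := by
    ext r
    refine ⟨fun hr => ⟨i + 1, by simp, by simpa using hr⟩, fun ⟨n, hn, hr⟩ => by simpa using hr⟩
  rw [h]
  exact (isLaverRamsey_setOf_exists_seqTake_mem _).isLaverPureRamsey

lemma isLaverPureRamsey_of_measurableSet {A : Set (ℕ → ℕ)} (hA : MeasurableSet A) :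
    IsLaverPureRamsey A := by
  have hle : MeasurableSpace.pi ≤ laverPureRamseyMeasurableSpace :=
    iSup_le fun i => MeasurableSpace.comap_le_iff_le_map.2 fun B _ =>
      isLaverPureRamsey_preimage_eval i B
  exact hle A hA

lemma exists_decides_finset {ι : Type*} {A : ι → Set (ℕ → ℕ)} (F : Finset ι)
    (hA : ∀ i ∈ F, IsLaverPureRamsey (A i)) {T : Set (List ℕ)} {s : List ℕ}
    (hT : IsLaverTreeWithStem T s) :
    ∃ S, IsLaverTreeWithStem S s ∧ S ⊆ T ∧ ∀ i ∈ F, Decides S (A i) := by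
  classical
  induction F using Finset.induction_on with
  | empty => exact ⟨T, hT, subset_rfl, by simp⟩
  | insert a F _ ih =>
    obtain ⟨S₀, hS₀, hS₀T, hS₀A⟩ := ih fun i hi => hA i (Finset.mem_insert_of_mem hi)
    obtain ⟨S, hS, hSS₀, hSA⟩ := hA a (Finset.mem_insert_self a F) S₀ s hS₀
    refine ⟨S, hS, hSS₀.trans hS₀T, fun i hi => ?_⟩
    rcases Finset.mem_insert.1 hi with rfl | hi
    · exact hSA
    · exact (hS₀A i hi).mono hSS₀

lemma Measurable.exists_measurableSet_forall_mem_iff {α β : Type*} [MeasurableSpace α]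
    [MeasurableSpace β] {s : Set α} {f : α → β} (hf : Measurable (s.domRestrict f))
    {B : Set β} (hB : MeasurableSet B) : ∃ C, MeasurableSet C ∧ ∀ x ∈ s, x ∈ C ↔ f x ∈ B := by
  obtain ⟨C, hC, hCB⟩ := MeasurableSpace.measurableSet_comap.1 (hf hB)
  exact ⟨C, hC, fun x hx => Set.ext_iff.1 hCB ⟨x, hx⟩⟩

lemma exists_subtree_dist_lt {Y : Type*} [PseudoMetricSpace Y] [CompactSpace Y]
    [MeasurableSpace Y] [OpensMeasurableSpace Y] {T U : Set (List ℕ)} {t : List ℕ}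
    {f : (ℕ → ℕ) → Y} (hf : Measurable ((branches T).domRestrict f))
    (hU : IsLaverTreeWithStem U t) (hUT : U ⊆ T) {δ : ℝ} (hδ : 0 < δ) :
    ∃ S, IsLaverTreeWithStem S t ∧ S ⊆ U ∧
      ∀ r₀ ∈ branches S, ∀ r₁ ∈ branches S, dist (f r₀) (f r₁) < δ := by
  obtain ⟨F, -, hF, hcover⟩ :=
    finite_cover_balls_of_compact (isCompact_univ (X := Y)) (half_pos hδ)
  choose C hCm hC using fun y : Y =>
    hf.exists_measurableSet_forall_mem_iff (measurableSet_ball (x := y) (ε := δ / 2))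
  obtain ⟨S, hS, hSU, hSC⟩ := exists_decides_finset hF.toFinset
    (fun y _ => isLaverPureRamsey_of_measurableSet (hCm y)) hU
  refine ⟨S, hS, hSU, fun r₀ h₀ r₁ h₁ => ?_⟩
  have hST := branches_mono (hSU.trans hUT)
  obtain ⟨y, hy, hr₀y⟩ := mem_iUnion₂.1 (hcover (mem_univ (f r₀)))
  have hSCy : branches S ⊆ C y := ((hSC y (hF.mem_toFinset.2 hy))).resolve_right
    fun h => h h₀ ((hC y r₀ (hST h₀)).2 hr₀y)
  have hr₁y : f r₁ ∈ Metric.ball y (δ / 2) := (hC y r₁ (hST h₁)).1 (hSCy h₁)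
  calc dist (f r₀) (f r₁) ≤ dist (f r₀) y + dist (f r₁) y := dist_triangle_right _ _ _
    _ < δ / 2 + δ / 2 := add_lt_add hr₀y hr₁y
    _ = δ := add_halves δ

/-- Pure decision for Laver forcing: if `T` is a Laver tree, `(Y, e)` a compact metric
space and `f : [T] → Y` Borel, then there is a Laver tree `S ⊆ T` with the same stem such
that `f ↾ [S]` is Lipschitz with constant `2` from the least-difference metric to `e`:
whenever two branches of `S` agree on their first `n+1` coordinates, their `f`-values are
`2^{-n}`-close. -/
theorem laver_pure_decision
    (T : Set (List ℕ)) (s : List ℕ) (hT : IsLaverTreeWithStem T s)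
    (Y : Type) [MetricSpace Y] [CompactSpace Y] [MeasurableSpace Y] [BorelSpace Y]
    (f : (ℕ → ℕ) → Y) (hf : Measurable ((branches T).restrict f)) :
    ∃ S : Set (List ℕ), IsLaverTreeWithStem S s ∧ S ⊆ T ∧
      ∀ r₀ ∈ branches S, ∀ r₁ ∈ branches S, ∀ n : ℕ,
        (∀ i ≤ n, r₀ i = r₁ i) → dist (f r₀) (f r₁) ≤ (1 / 2 : ℝ) ^ n := by
  obtain ⟨S, hS, hST, hSf⟩ := exists_fusion hT
    (fun m B => ∀ r₀ ∈ B, ∀ r₁ ∈ B, dist (f r₀) (f r₁) < (1 / 2 : ℝ) ^ (s.length + m))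
    (fun _ _ _ hB h r₀ h₀ r₁ h₁ => h r₀ (hB h₀) r₁ (hB h₁))
    fun m U t hU hUT _ => exists_subtree_dist_lt hf hU hUT (by positivity)
  refine ⟨S, hS, hST, fun r₀ h₀ r₁ h₁ n hn => ?_⟩
  -- `r₀` and `r₁` agree on the first `max (n + 1) s.length` coordinates.
  have hagree : seqTake r₁ (s.length + (n + 1 - s.length)) =
      seqTake r₀ (s.length + (n + 1 - s.length)) := by
    rcases le_total (n + 1) s.length with h | h
    · rw [Nat.sub_eq_zero_of_le h, add_zero, hS.seqTake_eq_stem h₀, hS.seqTake_eq_stem h₁]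
    · rw [Nat.add_sub_cancel' h]
      exact seqTake_eq_seqTake fun i hi => (hn i (by omega)).symm
  refine (hSf _ r₀ h₀ r₀ ⟨h₀, rfl⟩ r₁ ⟨h₁, hagree⟩).le.trans
    (pow_le_pow_of_le_one (by norm_num) (by norm_num) (by omega))
end

section
/- Let J ⊆ K be ideals on ω, both containing all finite sets, and suppose K is a P-ideal. Suppose A is a family of J-positive subsets of ω such that: (i) every member of A belongs to K; (ii) a ∩ b ∈ J for any two distinct a, b ∈ A; and (iii) for every J-positive set c ⊆ ω there is a ∈ A with c ∩ a ∉ J (that is, A is a maximal antichain in the poset of J-positive sets). Then for every set c ⊆ ω with c ∉ K, the collection {a ∈ A : c ∩ a ∉ J} is uncountable. -/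
open Set

/-- Let `J ⊆ K` be ideals on `ω` containing all finite sets, with `K` a P-ideal, and let
`A` be a maximal antichain of `J`-positive sets all of whose members lie in `K`. Then
every set `c ∉ K` is `J`-compatible with uncountably many members of `A`. -/
theorem uncountably_many_compatible_ideal
    (J K : Set (Set ℕ)) (hJK : J ⊆ K)
    (hJ_mono : ∀ s t : Set ℕ, s ⊆ t → t ∈ J → s ∈ J)
    (hJ_union : ∀ s ∈ J, ∀ t ∈ J, s ∪ t ∈ J)
    (hJ_fin : ∀ s : Set ℕ, s.Finite → s ∈ J)
    (hK_mono : ∀ s t : Set ℕ, s ⊆ t → t ∈ K → s ∈ K)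
    (hK_union : ∀ s ∈ K, ∀ t ∈ K, s ∪ t ∈ K)
    (hK_fin : ∀ s : Set ℕ, s.Finite → s ∈ K)
    (hK_P : ∀ a : ℕ → Set ℕ, (∀ n, a n ∈ K) → ∃ b ∈ K, ∀ n, (a n \ b).Finite)
    (A : Set (Set ℕ))
    (hA_pos : ∀ a ∈ A, a ∉ J ∧ a ∈ K)
    (hA_anti : ∀ a ∈ A, ∀ b ∈ A, a ≠ b → a ∩ b ∈ J)
    (hA_max : ∀ c : Set ℕ, c ∉ J → ∃ a ∈ A, c ∩ a ∉ J) :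
    ∀ c : Set ℕ, c ∉ K → ¬ ({a ∈ A | c ∩ a ∉ J}).Countable := by
  intro c hcK hS
  set S := {a ∈ A | c ∩ a ∉ J} with hSdef
  have hcJ : c ∉ J := fun h => hcK (hJK h)
  -- S is nonempty
  obtain ⟨a0, ha0A, ha0⟩ := hA_max c hcJ
  have hSne : S.Nonempty := ⟨a0, ha0A, ha0⟩
  obtain ⟨f, hf⟩ := (Set.countable_iff_exists_surjective hSne).mp hS
  -- apply P-ideal property to n ↦ c ∩ f n
  have hK' : ∀ n, (c ∩ (f n : Set ℕ)) ∈ K := by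
    intro n
    exact hK_mono _ _ (Set.inter_subset_right) ((hA_pos _ (f n).2.1).2)
  obtain ⟨b, hbK, hb⟩ := hK_P (fun n => c ∩ (f n : Set ℕ)) hK'
  have hc'K : c \ b ∉ K := by
    intro h
    have hsub : c ⊆ (c \ b) ∪ b := by
      intro x hx
      by_cases hxb : x ∈ b
      · exact Or.inr hxb
      · exact Or.inl ⟨hx, hxb⟩
    exact hcK (hK_mono c ((c \ b) ∪ b) hsub (hK_union _ h _ hbK))
  have hc'J : c \ b ∉ J := fun h => hc'K (hJK h)
  obtain ⟨a, haA, ha⟩ := hA_max (c \ b) hc'J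
  have hsub2 : (c \ b) ∩ a ⊆ c ∩ a := fun x hx => ⟨hx.1.1, hx.2⟩
  have haS : a ∈ S := ⟨haA, fun h => ha (hJ_mono _ _ hsub2 h)⟩
  obtain ⟨n, hn⟩ := hf ⟨a, haS⟩
  apply ha
  apply hJ_fin
  apply Set.Finite.subset (hb n)
  intro x hx
  have : (f n : Set ℕ) = a := congrArg Subtype.val hn
  exact ⟨⟨hx.1.1, this ▸ hx.2⟩, hx.1.2⟩
end

section
/- Let 0 < β < α < 1 be real numbers, and let a be a set of positive integers such that Σ_{k∈a} k^{-α} = ∞. Then there exists b ⊆ a such that Σ_{k∈b} k^{-α} < ∞ while Σ_{k∈b} k^{-β} = ∞. In particular, for a strictly decreasing sequence ⟨α_n : n ∈ ω⟩ of reals in (0,1), the summable ideals J_n = {a ⊆ ω∖{0} : Σ_{k∈a} k^{-α_n} < ∞} form an inclusion-decreasing sequence which does not stabilize: for every n and every a ∉ J_n there is b ⊆ a with b ∈ J_n ∖ J_{n+1}. -/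
open Set

/-- The summable ideal with weight function `k ↦ k^{-α}`: the sets `a` of positive
integers with `Σ_{k ∈ a} k^{-α} < ∞`. -/
def sumIdeal (α : ℝ) : Set (Set ℕ) :=
  {a | a ⊆ {k | 0 < k} ∧ Summable fun k : a => ((k : ℕ) : ℝ) ^ (-α)}


lemma key_step (α β : ℝ) (hβ : 0 < β) (hβα : β < α) (hα1 : α < 1)
    (a : Set ℕ) (ha : a ⊆ {k | 0 < k})
    (hdiv : ¬ Summable (fun k : a => ((k : ℕ) : ℝ) ^ (-α))) :
    ∃ b ⊆ a, Summable (fun k : b => ((k : ℕ) : ℝ) ^ (-α)) ∧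
      ¬ Summable (fun k : b => ((k : ℕ) : ℝ) ^ (-β)) := by
  classical
  set f : ℝ → ℕ → ℝ := fun γ => a.indicator (fun k => (k : ℝ) ^ (-γ)) with hf
  have hone : ∀ k ∈ a, (1 : ℝ) ≤ (k : ℝ) := by
    intro k hk; exact_mod_cast Nat.one_le_iff_ne_zero.2 (Nat.pos_iff_ne_zero.1 (ha hk))
  have hfnn : ∀ γ k, 0 ≤ f γ k := by
    intro γ k
    simp only [hf]
    exact Set.indicator_nonneg (fun k _ => Real.rpow_nonneg (Nat.cast_nonneg k) _) k
  have hfle1 : ∀ k, f β k ≤ 1 := by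
    intro k
    by_cases hk : k ∈ a
    · simp only [hf, Set.indicator_of_mem hk]
      exact Real.rpow_le_one_of_one_le_of_nonpos (hone k hk) (by linarith)
    · simp [hf, Set.indicator_of_notMem hk]
  have hdiva : ¬ Summable (f α) := by
    rw [← summable_subtype_iff_indicator]
    exact hdiv
  have hdivb : ¬ Summable (f β) := by
    intro hs
    refine hdiva (hs.of_nonneg_of_le (hfnn α) ?_)
    intro k
    by_cases hk : k ∈ a
    · simp only [hf, Set.indicator_of_mem hk]
      exact Real.rpow_le_rpow_of_exponent_le (hone k hk) (by linarith)
    · simp [hf, Set.indicator_of_notMem hk]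
  have htend := (not_summable_iff_tendsto_nat_atTop_of_nonneg (hfnn β)).1 hdivb
  -- key existence of blocks
  have key : ∀ L : ℕ, ∃ M : ℕ, L < M ∧
      1 ≤ ∑ k ∈ Finset.Ioc L M, f β k ∧ ∑ k ∈ Finset.Ioc L M, f β k ≤ 2 := by
    intro L
    have hioc : ∀ M, L ≤ M → ∑ k ∈ Finset.range (L+1), f β k + ∑ k ∈ Finset.Ioc L M, f β k
        = ∑ k ∈ Finset.range (M+1), f β k := by
      intro M hM
      have hd : Disjoint (Finset.range (L+1)) (Finset.Ioc L M) := by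
        rw [Finset.disjoint_left]
        intro k hk1 hk2
        rw [Finset.mem_range] at hk1
        rw [Finset.mem_Ioc] at hk2
        omega
      rw [← Finset.sum_union hd]
      congr 1
      ext k
      simp only [Finset.mem_union, Finset.mem_range, Finset.mem_Ioc]
      omega
    have hex : ∃ M, 1 ≤ ∑ k ∈ Finset.Ioc L M, f β k := by
      obtain ⟨m, hm⟩ := (htend.eventually_ge_atTop
        (∑ k ∈ Finset.range (L+1), f β k + 1)).exists
      refine ⟨max m (L+1) - 1, ?_⟩
      have hL : L ≤ max m (L+1) - 1 := by omega
      have h1 : max m (L+1) - 1 + 1 = max m (L+1) := by omega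
      have hmono : ∑ k ∈ Finset.range m, f β k ≤ ∑ k ∈ Finset.range (max m (L+1)), f β k := by
        apply Finset.sum_le_sum_of_subset_of_nonneg
        · exact Finset.range_subset_range.2 (le_max_left _ _)
        · intro i _ _; exact hfnn β i
      have := hioc _ hL
      rw [h1] at this
      linarith
    set M := Nat.find hex with hM
    have hM1 : 1 ≤ ∑ k ∈ Finset.Ioc L M, f β k := Nat.find_spec hex
    have hLM : L < M := by
      by_contra hc
      push_neg at hc
      rw [Finset.Ioc_eq_empty (by omega)] at hM1
      simp at hM1
      linarith
    refine ⟨M, hLM, hM1, ?_⟩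
    have hMpos : M - 1 + 1 = M := by omega
    have hmin : ∑ k ∈ Finset.Ioc L (M - 1), f β k < 1 := by
      have := Nat.find_min hex (m := M - 1) (by omega)
      push_neg at this
      exact this
    have := Finset.sum_Ioc_succ_top (a := L) (b := M - 1) (by omega) (f β)
    rw [hMpos] at this
    rw [this]
    have := hfle1 M
    rw [hMpos] at *
    linarith [hfle1 (M - 1 + 1)]
  choose F hF1 hF2 hF3 using key
  -- c such that c * (α - β) ≥ 1
  set c : ℕ := ⌈(α - β)⁻¹⌉₊ with hc
  have hαβ : 0 < α - β := by linarith
  have hc1 : 1 ≤ (c : ℝ) * (α - β) := by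
    have := Nat.le_ceil (α - β)⁻¹
    rw [← hc] at this
    have h2 : (α - β)⁻¹ * (α - β) ≤ (c : ℝ) * (α - β) :=
      mul_le_mul_of_nonneg_right this (le_of_lt hαβ)
    rwa [inv_mul_cancel₀ hαβ.ne'] at h2
  set N : ℕ → ℕ := fun n => Nat.rec 0 (fun m Nm => F (max Nm (2 ^ (c * m)))) n with hN
  set L : ℕ → ℕ := fun n => max (N n) (2 ^ (c * n)) with hL
  have hNL : ∀ n, N (n + 1) = F (L n) := fun n => rfl
  have hLN : ∀ n, L n < N (n + 1) := fun n => (hNL n) ▸ hF1 (L n)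
  have hNmono : StrictMono N := by
    apply strictMono_nat_of_lt_succ
    intro n
    exact lt_of_le_of_lt (le_max_left _ _) (hLN n)
  have hNn : ∀ n, n ≤ N n := fun n => hNmono.le_apply
  set b : Set ℕ := {k | k ∈ a ∧ ∃ n, L n < k ∧ k ≤ N (n + 1)} with hb
  have hba : b ⊆ a := fun k hk => hk.1
  have heq : ∀ (γ : ℝ) (n : ℕ), ∀ k ∈ Finset.Ioc (L n) (N (n + 1)),
      b.indicator (fun k => (k : ℝ) ^ (-γ)) k = a.indicator (fun k => (k : ℝ) ^ (-γ)) k := by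
    intro γ n k hk
    rw [Finset.mem_Ioc] at hk
    by_cases hka : k ∈ a
    · have hkb : k ∈ b := ⟨hka, n, hk.1, hk.2⟩
      rw [Set.indicator_of_mem hka, Set.indicator_of_mem hkb]
    · have hkb : k ∉ b := fun hkb => hka (hba hkb)
      rw [Set.indicator_of_notMem hka, Set.indicator_of_notMem hkb]
  set g : ℕ → ℝ := b.indicator (fun k => (k : ℝ) ^ (-α)) with hg
  set h : ℕ → ℝ := b.indicator (fun k => (k : ℝ) ^ (-β)) with hh
  have hgnn : ∀ k, 0 ≤ g k :=
    fun k => Set.indicator_nonneg (fun k _ => Real.rpow_nonneg (Nat.cast_nonneg k) _) k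
  have hhnn : ∀ k, 0 ≤ h k :=
    fun k => Set.indicator_nonneg (fun k _ => Real.rpow_nonneg (Nat.cast_nonneg k) _) k
  -- disjointness of blocks
  have hdisj0 : ∀ m n : ℕ, m < n →
      Disjoint (Finset.Ioc (L m) (N (m + 1))) (Finset.Ioc (L n) (N (n + 1))) := by
    intro m n hlt
    rw [Finset.disjoint_left]
    intro k hk1 hk2
    rw [Finset.mem_Ioc] at hk1
    rw [Finset.mem_Ioc] at hk2
    have h1 : N (m + 1) ≤ N n := hNmono.monotone hlt
    have h2 : N n ≤ L n := le_max_left _ _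
    omega
  have hdisj : ∀ (s : Finset ℕ), (↑s : Set ℕ).PairwiseDisjoint
      (fun n => Finset.Ioc (L n) (N (n + 1))) := by
    intro s m _ n _ hmn
    rcases lt_or_gt_of_ne hmn with hlt | hlt
    · exact hdisj0 m n hlt
    · exact (hdisj0 n m hlt).symm
  -- block α-bound
  have hblockα : ∀ n, ∑ k ∈ Finset.Ioc (L n) (N (n + 1)), g k ≤ (1/2 : ℝ) ^ n * 2 := by
    intro n
    have hstep : ∀ k ∈ Finset.Ioc (L n) (N (n + 1)),
        g k ≤ (1/2 : ℝ) ^ n * a.indicator (fun k => (k : ℝ) ^ (-β)) k := by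
      intro k hk
      rw [Finset.mem_Ioc] at hk
      by_cases hkb : k ∈ b
      · have hka : k ∈ a := hba hkb
        have hk1 : (1 : ℝ) ≤ (k : ℝ) := hone k hka
        have hkpos : (0 : ℝ) < (k : ℝ) := by linarith
        rw [hg, Set.indicator_of_mem hkb, Set.indicator_of_mem hka]
        have hsplit : (k : ℝ) ^ (-α) = (k : ℝ) ^ (β - α) * (k : ℝ) ^ (-β) := by
          rw [← Real.rpow_add hkpos]; ring_nf
        rw [hsplit]
        have hklarge : (2 : ℝ) ^ (c * n) ≤ (k : ℝ) := by
          have : (2 : ℕ) ^ (c * n) ≤ k := le_of_lt (lt_of_le_of_lt (le_max_right (N n) _) hk.1)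
          exact_mod_cast this
        have h2pos : (0 : ℝ) < (2 : ℝ) ^ (c * n) := by positivity
        have hb1 : (k : ℝ) ^ (β - α) ≤ ((2 : ℝ) ^ (c * n)) ^ (β - α) :=
          Real.rpow_le_rpow_of_nonpos h2pos hklarge (by linarith)
        have hb2 : ((2 : ℝ) ^ (c * n)) ^ (β - α) ≤ (1/2 : ℝ) ^ n := by
          rw [← Real.rpow_natCast 2 (c * n), ← Real.rpow_mul (by norm_num)]
          have hexp : ((c * n : ℕ) : ℝ) * (β - α) ≤ (-(n : ℝ)) := by
            push_cast
            nlinarith [hc1, Nat.cast_nonneg (α := ℝ) n]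
          calc (2 : ℝ) ^ (((c * n : ℕ) : ℝ) * (β - α)) ≤ (2 : ℝ) ^ (-(n : ℝ)) :=
                Real.rpow_le_rpow_of_exponent_le (by norm_num) hexp
            _ = (1/2 : ℝ) ^ n := by
                rw [Real.rpow_neg (by norm_num), Real.rpow_natCast, one_div, inv_pow]
        have hβnn : (0 : ℝ) ≤ (k : ℝ) ^ (-β) := Real.rpow_nonneg (by linarith) _
        calc (k:ℝ) ^ (β - α) * (k:ℝ) ^ (-β) ≤ (1/2:ℝ) ^ n * (k:ℝ) ^ (-β) :=
              mul_le_mul_of_nonneg_right (le_trans hb1 hb2) hβnn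
          _ = _ := rfl
      · rw [hg, Set.indicator_of_notMem hkb]
        exact mul_nonneg (by positivity)
          (Set.indicator_nonneg (fun k _ => Real.rpow_nonneg (Nat.cast_nonneg k) _) k)
    calc ∑ k ∈ Finset.Ioc (L n) (N (n + 1)), g k
        ≤ ∑ k ∈ Finset.Ioc (L n) (N (n + 1)),
            (1/2 : ℝ) ^ n * a.indicator (fun k => (k : ℝ) ^ (-β)) k :=
          Finset.sum_le_sum hstep
      _ = (1/2 : ℝ) ^ n * ∑ k ∈ Finset.Ioc (L n) (N (n + 1)), f β k := by
          rw [Finset.mul_sum]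
      _ ≤ (1/2 : ℝ) ^ n * 2 := by
          apply mul_le_mul_of_nonneg_left _ (by positivity)
          rw [hNL n]; exact hF3 (L n)
  -- summability of g
  have hgsum : Summable g := by
    apply summable_of_sum_range_le hgnn (c := 4)
    intro M
    have hfilter : ∑ k ∈ Finset.range M, g k
        = ∑ k ∈ (Finset.range M).filter (· ∈ b), g k := by
      rw [Finset.sum_filter_of_ne]
      intro k _ hgk
      by_contra hkb
      exact hgk (Set.indicator_of_notMem hkb _)
    set T := (Finset.range M).biUnion (fun n => Finset.Ioc (L n) (N (n + 1))) with hT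
    have hsub : (Finset.range M).filter (· ∈ b) ⊆ T := by
      intro k hk
      rw [Finset.mem_filter, Finset.mem_range] at hk
      obtain ⟨hkM, hka, n, hn1, hn2⟩ := hk
      rw [hT, Finset.mem_biUnion]
      refine ⟨n, ?_, Finset.mem_Ioc.2 ⟨hn1, hn2⟩⟩
      rw [Finset.mem_range]
      have : n ≤ N n := hNn n
      have : N n ≤ L n := le_max_left _ _
      omega
    calc ∑ k ∈ Finset.range M, g k
        = ∑ k ∈ (Finset.range M).filter (· ∈ b), g k := hfilter
      _ ≤ ∑ k ∈ T, g k :=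
          Finset.sum_le_sum_of_subset_of_nonneg hsub (fun k _ _ => hgnn k)
      _ = ∑ n ∈ Finset.range M, ∑ k ∈ Finset.Ioc (L n) (N (n + 1)), g k :=
          Finset.sum_biUnion (hdisj _)
      _ ≤ ∑ n ∈ Finset.range M, (1/2 : ℝ) ^ n * 2 :=
          Finset.sum_le_sum (fun n _ => hblockα n)
      _ = (∑ n ∈ Finset.range M, (1/2 : ℝ) ^ n) * 2 := by rw [← Finset.sum_mul]
      _ ≤ 2 * 2 := mul_le_mul_of_nonneg_right (sum_geometric_two_le M) (by norm_num)
      _ = 4 := by norm_num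
  -- non-summability of h
  have hhdiv : ¬ Summable h := by
    intro hS
    obtain ⟨M, hM⟩ := exists_nat_gt (∑' k, h k)
    set T := (Finset.range M).biUnion (fun n => Finset.Ioc (L n) (N (n + 1))) with hT
    have hTsum : (M : ℝ) ≤ ∑ k ∈ T, h k := by
      rw [Finset.sum_biUnion (hdisj _)]
      have : ∀ n ∈ Finset.range M, (1:ℝ) ≤ ∑ k ∈ Finset.Ioc (L n) (N (n + 1)), h k := by
        intro n _
        have : ∑ k ∈ Finset.Ioc (L n) (N (n + 1)), h k
            = ∑ k ∈ Finset.Ioc (L n) (N (n + 1)), f β k :=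
          Finset.sum_congr rfl (heq β n)
        rw [this, hNL n]
        exact hF2 (L n)
      calc (M : ℝ) = ∑ _n ∈ Finset.range M, (1:ℝ) := by simp
        _ ≤ _ := Finset.sum_le_sum this
    have := Summable.sum_le_tsum T (fun k _ => hhnn k) hS
    linarith
  refine ⟨b, hba, ?_, ?_⟩
  · rw [← summable_subtype_iff_indicator] at hgsum
    exact hgsum
  · intro hcon
    apply hhdiv
    rw [← summable_subtype_iff_indicator]
    exact hcon


/-- For `0 < β < α < 1` and a set `a` of positive integers with `Σ_{k ∈ a} k^{-α} = ∞`,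
there is `b ⊆ a` with `Σ_{k ∈ b} k^{-α} < ∞` and `Σ_{k ∈ b} k^{-β} = ∞`. In particular,
for a strictly decreasing sequence `⟨α_n⟩` of reals in `(0,1)` the summable ideals
`J_n = sumIdeal α_n` form an inclusion-decreasing sequence which does not stabilize. -/
theorem summable_ideals_do_not_stabilize :
    (∀ α β : ℝ, 0 < β → β < α → α < 1 →
      ∀ a : Set ℕ, a ⊆ {k | 0 < k} →
        ¬ Summable (fun k : a => ((k : ℕ) : ℝ) ^ (-α)) →
        ∃ b ⊆ a, Summable (fun k : b => ((k : ℕ) : ℝ) ^ (-α)) ∧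
          ¬ Summable (fun k : b => ((k : ℕ) : ℝ) ^ (-β))) ∧
    (∀ αs : ℕ → ℝ, StrictAnti αs → (∀ n, αs n ∈ Set.Ioo (0 : ℝ) 1) →
      (∀ n, sumIdeal (αs (n + 1)) ⊆ sumIdeal (αs n)) ∧
      (∀ n, ∀ a : Set ℕ, a ⊆ {k | 0 < k} → a ∉ sumIdeal (αs n) →
        ∃ b ⊆ a, b ∈ sumIdeal (αs n) ∧ b ∉ sumIdeal (αs (n + 1)))) := by
  constructor
  · exact fun α β hβ hβα hα1 a ha hdiv => key_step α β hβ hβα hα1 a ha hdiv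
  · intro αs hanti hmem
    constructor
    · intro n a haa
      obtain ⟨hpos, hsum⟩ := haa
      refine ⟨hpos, ?_⟩
      apply hsum.of_nonneg_of_le
      · intro k; exact Real.rpow_nonneg (Nat.cast_nonneg _) _
      · intro k
        have h1 : (1 : ℝ) ≤ ((k : ℕ) : ℝ) := by
          exact_mod_cast Nat.one_le_iff_ne_zero.2 (Nat.pos_iff_ne_zero.1 (hpos k.2))
        exact Real.rpow_le_rpow_of_exponent_le h1 (by
          have := hanti (Nat.lt_succ_self n); linarith)
    · intro n a hpos hna
      have hdiv : ¬ Summable (fun k : a => ((k : ℕ) : ℝ) ^ (-(αs n))) :=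
        fun hs => hna ⟨hpos, hs⟩
      obtain ⟨b, hba, hsum, hnsum⟩ := key_step (αs n) (αs (n + 1)) (hmem (n + 1)).1
        (hanti (Nat.lt_succ_self n)) (hmem n).2 a hpos hdiv
      exact ⟨b, hba, ⟨hba.trans hpos, hsum⟩, fun hc => hnsum hc.2⟩
end

section
/- Let ⟨α_n : n ∈ ω⟩ be a strictly decreasing sequence of reals in (0,1), let J_n = {a ⊆ ω∖{0} : Σ_{k∈a} k^{-α_n} < ∞}, and let J = ⋂_n J_n. Then J is a tall P-ideal: (a) every infinite set a of positive integers has an infinite subset b with b ∈ J; and (b) for every countable family {a_m : m ∈ ω} ⊆ J there is b ∈ J with a_m ∖ b finite for every m. -/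
/-!
Both halves are diagonal arguments valid for any countable family of finite weights `w n`
tending to `0`. At stage `j` one controls the finite sum `W j = w 0 + ⋯ + w j`, which dominates
every `w n` with `n ≤ j`. For tallness pick `k_j ∈ a`, increasing, with `W j k_j < 2⁻ʲ`; for the
P-property remove from each `a m` a finite set so that the `W m`-sum over the rest is `< 2⁻ᵐ`,
and take the union. Either way the `w n`-sum over the new set is finitely many finite terms
followed by terms dominated by `2⁻ʲ`.
-/

open Set

open Filter Topology ENNReal

namespace ENNReal

theorem tsum_ne_top_of_le_of_forall_ge {f g : ℕ → ℝ≥0∞} (n : ℕ) (hf : ∀ m < n, f m ≠ ∞)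
    (hfg : ∀ m, n ≤ m → f m ≤ g m) (hg : ∑' m, g m ≠ ∞) : ∑' m, f m ≠ ∞ := by
  rw [← (ENNReal.summable (f := fun m => f (m + n))).sum_add_tsum_nat_add']
  refine add_ne_top.2 ⟨sum_ne_top.2 fun m hm => hf m (Finset.mem_range.1 hm), ?_⟩
  refine ne_top_of_le_ne_top ?_
    (ENNReal.tsum_le_tsum fun m => hfg (m + n) (Nat.le_add_left n m))
  exact ne_top_of_le_ne_top hg (ENNReal.tsum_comp_le_tsum_of_injective (add_left_injective n) g)

theorem inv_two_pow_pos (j : ℕ) : (0 : ℝ≥0∞) < 2⁻¹ ^ j :=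
  ENNReal.pow_pos (ENNReal.inv_pos.2 ofNat_ne_top) j

theorem tsum_inv_two_pow_ne_top : ∑' m : ℕ, (2⁻¹ : ℝ≥0∞) ^ m ≠ ∞ := by
  simp [ENNReal.tsum_geometric, ENNReal.one_sub_inv_two]

theorem exists_finset_tsum_sdiff_lt {α : Type*} {f : α → ℝ≥0∞} {s : Set α}
    (hs : ∑' k : s, f k ≠ ∞) {ε : ℝ≥0∞} (hε : 0 < ε) :
    ∃ t : Finset α, ∑' k : ↥(s \ t), f k < ε := by
  rw [tsum_subtype] at hs
  obtain ⟨t, ht⟩ := ((ENNReal.tendsto_tsum_compl_atTop_zero hs).eventually_lt_const hε).exists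
  refine ⟨t, ?_⟩
  rwa [tsum_subtype, sdiff_eq, inter_comm, ← indicator_indicator, ← tsum_subtype]

end ENNReal

theorem le_sum_range_succ_of_le (w : ℕ → ℕ → ℝ≥0∞) {n j : ℕ} (h : n ≤ j) (k : ℕ) :
    w n k ≤ ∑ i ∈ Finset.range (j + 1), w i k :=
  Finset.single_le_sum (f := fun i => w i k) (fun _ _ => zero_le)
    (Finset.mem_range.2 (Nat.lt_succ_of_le h))

section Weights

variable {w : ℕ → ℕ → ℝ≥0∞}

theorem exists_infinite_subset_forall_tsum_ne_top
    (hw : ∀ n, Tendsto (w n) atTop (𝓝 0)) (hw_ne_top : ∀ n k, w n k ≠ ∞) {a : Set ℕ}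
    (ha : a.Infinite) : ∃ b ⊆ a, b.Infinite ∧ ∀ n, ∑' k : b, w n k ≠ ∞ := by
  have hsmall : ∀ j, ∀ᶠ k in atTop, ∑ i ∈ Finset.range (j + 1), w i k < 2⁻¹ ^ j := fun j => by
    have := tendsto_finsetSum (Finset.range (j + 1)) fun i _ => hw i
    rw [Finset.sum_const_zero] at this
    exact this.eventually_lt_const (inv_two_pow_pos j)
  obtain ⟨φ, hφ, hφa, hφsmall⟩ : ∃ φ : ℕ → ℕ, StrictMono φ ∧ (∀ j, φ j ∈ a) ∧
      ∀ j, ∑ i ∈ Finset.range (j + 1), w i (φ j) < 2⁻¹ ^ j := by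
    obtain ⟨φ, hφ, h⟩ := extraction_forall_of_frequently fun j =>
      (Nat.frequently_atTop_iff_infinite.2 ha).and_eventually (hsmall j)
    exact ⟨φ, hφ, fun j => (h j).1, fun j => (h j).2⟩
  refine ⟨range φ, range_subset_iff.2 hφa, infinite_range_of_injective hφ.injective, fun n => ?_⟩
  rw [tsum_range (w n) hφ.injective]
  exact tsum_ne_top_of_le_of_forall_ge n (fun _ _ => hw_ne_top _ _)
    (fun j hj => (le_sum_range_succ_of_le w hj _).trans (hφsmall j).le) tsum_inv_two_pow_ne_top

theorem exists_forall_finite_sdiff_forall_tsum_ne_top {a : ℕ → Set ℕ}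
    (ha : ∀ m n, ∑' k : a m, w n k ≠ ∞) :
    ∃ b ⊆ ⋃ m, a m, (∀ n, ∑' k : b, w n k ≠ ∞) ∧ ∀ m, (a m \ b).Finite := by
  have htail : ∀ m, ∃ t : Finset ℕ,
      ∑' k : ↥(a m \ t), ∑ i ∈ Finset.range (m + 1), w i k < 2⁻¹ ^ m := fun m => by
    refine exists_finset_tsum_sdiff_lt (f := fun k => ∑ i ∈ Finset.range (m + 1), w i k) ?_
      (inv_two_pow_pos m)
    rw [Summable.tsum_finsetSum fun _ _ => ENNReal.summable]
    exact sum_ne_top.2 fun n _ => ha m n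
  choose t ht using htail
  refine ⟨⋃ m, a m \ t m, iUnion_mono fun m => sdiff_subset, fun n => ?_, fun m => ?_⟩
  · refine ne_top_of_le_ne_top ?_ (ENNReal.tsum_iUnion_le_tsum (w n) _)
    refine tsum_ne_top_of_le_of_forall_ge n
      (fun m _ => ne_top_of_le_ne_top (ha m n) (ENNReal.tsum_mono_subtype _ sdiff_subset))
      (fun m hm => ?_) tsum_inv_two_pow_ne_top
    exact (ENNReal.tsum_le_tsum (f := fun k : ↥(a m \ t m) => w n k) fun k =>
      le_sum_range_succ_of_le w hm k).trans (ht m).le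
  · refine (t m).finite_toSet.subset fun k hk => ?_
    by_contra hkt
    exact hk.2 (mem_iUnion.2 ⟨m, hk.1, hkt⟩)

end Weights

theorem mem_sumIdeal_iff (α : ℝ) (a : Set ℕ) :
    a ∈ sumIdeal α ↔ a ⊆ {k | 0 < k} ∧ ∑' k : a, ENNReal.ofReal ((k : ℝ) ^ (-α)) ≠ ∞ := by
  have hnonneg (k : a) : 0 ≤ ((k : ℕ) : ℝ) ^ (-α) := Real.rpow_nonneg (Nat.cast_nonneg _) _
  refine and_congr_right fun _ => ⟨fun h => ?_, fun h => ?_⟩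
  · rw [← ENNReal.ofReal_tsum_of_nonneg hnonneg h]
    exact ofReal_ne_top
  · exact (ENNReal.summable_toReal h).congr fun k => toReal_ofReal (hnonneg k)

theorem tendsto_ofReal_natCast_rpow_neg_atTop {α : ℝ} (hα : 0 < α) :
    Tendsto (fun k : ℕ => ENNReal.ofReal ((k : ℝ) ^ (-α))) atTop (𝓝 0) := by
  simpa using ENNReal.tendsto_ofReal
    ((tendsto_rpow_neg_atTop hα).comp tendsto_natCast_atTop_atTop)

theorem inter_sumIdeal_tall_Pideal_general
    (αs : ℕ → ℝ) (hmem : ∀ n, αs n ∈ Set.Ioo (0 : ℝ) 1) :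
    (∀ a : Set ℕ, a ⊆ {k | 0 < k} → a.Infinite →
      ∃ b ⊆ a, b.Infinite ∧ b ∈ ⋂ n, sumIdeal (αs n)) ∧
    (∀ a : ℕ → Set ℕ, (∀ m, a m ∈ ⋂ n, sumIdeal (αs n)) →
      ∃ b ∈ ⋂ n, sumIdeal (αs n), ∀ m, (a m \ b).Finite) := by
  simp only [mem_iInter, mem_sumIdeal_iff]
  refine ⟨fun a hpos ha => ?_, fun a ha => ?_⟩
  · obtain ⟨b, hba, hb, hsum⟩ := exists_infinite_subset_forall_tsum_ne_top
      (fun n => tendsto_ofReal_natCast_rpow_neg_atTop (hmem n).1) (fun _ _ => ofReal_ne_top) ha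
    exact ⟨b, hba, hb, fun n => ⟨hba.trans hpos, hsum n⟩⟩
  · obtain ⟨b, hb, hsum, hfin⟩ := exists_forall_finite_sdiff_forall_tsum_ne_top
      (w := fun n k => ENNReal.ofReal ((k : ℝ) ^ (-αs n))) fun m n => (ha m n).2
    exact ⟨b, fun n => ⟨hb.trans (iUnion_subset fun m => (ha m 0).1), hsum n⟩, hfin⟩

/-- For a strictly decreasing sequence `⟨α_n⟩` of reals in `(0,1)`, the intersection
`J = ⋂_n sumIdeal α_n` is a tall P-ideal: (a) every infinite set of positive integers has
an infinite subset in `J`; (b) for every countable family `{a_m} ⊆ J` there is `b ∈ J`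
with each `a_m \ b` finite. -/
theorem inter_sumIdeal_tall_Pideal
    (αs : ℕ → ℝ) (hanti : StrictAnti αs) (hmem : ∀ n, αs n ∈ Set.Ioo (0 : ℝ) 1) :
    (∀ a : Set ℕ, a ⊆ {k | 0 < k} → a.Infinite →
      ∃ b ⊆ a, b.Infinite ∧ b ∈ ⋂ n, sumIdeal (αs n)) ∧
    (∀ a : ℕ → Set ℕ, (∀ m, a m ∈ ⋂ n, sumIdeal (αs n)) →
      ∃ b ∈ ⋂ n, sumIdeal (αs n), ∀ m, (a m \ b).Finite) :=
  inter_sumIdeal_tall_Pideal_general αs hmem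
end

section
/- Let μ be a lower semicontinuous submeasure on ω. Define μ^{<ω} on subsets of [ω]^{<ω}∖{∅} by μ^{<ω}(b) = inf{μ(a) : a ⊆ ω and x ∩ a ≠ ∅ for every x ∈ b}. Then μ^{<ω} is a lower semicontinuous submeasure on the countable set [ω]^{<ω}∖{∅}, and {b : μ^{<ω}(b) < ∞} = J^{<ω}, where J = {a ⊆ ω : μ(a) < ∞}. -/
open Set ENNReal

/-- The countable set `[ω]^{<ω} ∖ {∅}` of nonempty finite subsets of `ω`. -/
abbrev FinPos := {s : Finset ℕ // s.Nonempty}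

/-- The submeasure `μ^{<ω}` on `[ω]^{<ω} ∖ {∅}` derived from a submeasure `μ` on `ω`:
`μ^{<ω}(b) = inf {μ(a) : a ⊆ ω and x ∩ a ≠ ∅ for every x ∈ b}`. -/
noncomputable def muFin (μ : Set ℕ → ℝ≥0∞) (b : Set FinPos) : ℝ≥0∞ :=
  ⨅ (a : Set ℕ) (_ : ∀ x ∈ b, ∃ k ∈ (x : FinPos).1, k ∈ a), μ a

/-!
Only lower semicontinuity needs an argument. A set meeting every `x ∈ b` may be shrunk to the
values `K[b]` of a choice function `K : Π x, x`. If `μ^{<ω} < r` on every finite `d ⊆ b`, each such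
`d` has a choice function with `μ (K[d]) < r`. Choice functions form a compact space (Tychonoff) on
which `K ↦ K[d]` is locally constant, so a single `K` works for all finite `d ⊆ b` at once, and
lower semicontinuity of `μ` gives `μ^{<ω}(b) ≤ μ (K[b]) ≤ r`.
-/

open Filter Topology

namespace FinPos

def Hits (b : Set FinPos) (a : Set ℕ) : Prop := ∀ x ∈ b, ∃ k ∈ x.1, k ∈ a

theorem Hits.union {b b' : Set FinPos} {a a' : Set ℕ} (h : Hits b a) (h' : Hits b' a') :
    Hits (b ∪ b') (a ∪ a') := by
  rintro x (hx | hx)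
  · obtain ⟨k, hkx, hka⟩ := h x hx
    exact ⟨k, hkx, Or.inl hka⟩
  · obtain ⟨k, hkx, hka⟩ := h' x hx
    exact ⟨k, hkx, Or.inr hka⟩

/-- Choice functions `x ↦ K x ∈ x`. As a product of finite discrete spaces this type is compact. -/
abbrev Selector := (x : FinPos) → x.1

def Selector.img (K : Selector) (b : Set FinPos) : Set ℕ := (fun x => (K x : ℕ)) '' b

theorem Selector.hits_img (K : Selector) (b : Set FinPos) : Hits b (K.img b) :=
  fun x hx => ⟨K x, (K x).2, x, hx, rfl⟩

theorem Hits.exists_img_subset {b : Set FinPos} {a : Set ℕ} (h : Hits b a) :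
    ∃ K : Selector, K.img b ⊆ a := by
  classical
  refine ⟨fun x => if hx : x ∈ b then ⟨(h x hx).choose, (h x hx).choose_spec.1⟩
    else ⟨x.2.choose, x.2.choose_spec⟩, ?_⟩
  rintro _ ⟨x, hx, rfl⟩
  simpa [dif_pos hx] using (h x hx).choose_spec.2

theorem Selector.isLocallyConstant_img (d : Finset FinPos) :
    IsLocallyConstant fun K : Selector => K.img d := by
  refine (IsLocallyConstant.iff_eventually_eq _).2 fun K => ?_
  have hagree : ∀ᶠ L in 𝓝 K, ∀ x ∈ d, L x = K x :=
    (eventually_all_finset d).2 fun x _ =>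
      (continuous_apply x).continuousAt ((isOpen_discrete {K x}).mem_nhds rfl)
  filter_upwards [hagree] with L hL
  exact Set.image_congr fun x hx => congrArg Subtype.val (hL x hx)

/-- A form of Rado's selection principle, obtained from the compactness of `Selector`. -/
theorem Selector.exists_forall_finset {P : Set ℕ → Prop} (hP : ∀ s t, s ⊆ t → P t → P s)
    {b : Set FinPos} (h : ∀ d : Finset FinPos, ↑d ⊆ b → ∃ K : Selector, P (K.img d)) :
    ∃ K : Selector, ∀ d : Finset FinPos, ↑d ⊆ b → P (K.img d) := by
  let T (d : {d : Finset FinPos // ↑d ⊆ b}) : Set Selector := {K | P (K.img d.1)}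
  have hclosed : ∀ d, IsClosed (T d) := fun d =>
    show IsClosed ((fun K : Selector => K.img d.1) ⁻¹' {s | P s}) from
      isOpen_compl_iff.mp (isLocallyConstant_img d.1 {s | P s}ᶜ)
  have hdir : Directed (· ⊇ ·) T := by
    rintro ⟨d, hd⟩ ⟨d', hd'⟩
    refine ⟨⟨d ∪ d', by simpa using And.intro hd hd'⟩, ?_, ?_⟩ <;>
      refine fun K hK => hP _ _ (Set.image_mono ?_) hK <;> simp
  have : Nonempty {d : Finset FinPos // ↑d ⊆ b} := ⟨⟨∅, by simp⟩⟩
  obtain ⟨K, hK⟩ := IsCompact.nonempty_iInter_of_directed_nonempty_isCompact_isClosed T hdir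
    (fun d => h d.1 d.2) (fun d => (hclosed d).isCompact) hclosed
  exact ⟨K, fun d hd => Set.mem_iInter.mp hK ⟨d, hd⟩⟩

end FinPos

open FinPos

section muFin

variable {μ : Set ℕ → ℝ≥0∞}

theorem muFin_le {b : Set FinPos} {a : Set ℕ} (h : Hits b a) : muFin μ b ≤ μ a :=
  iInf₂_le a h

theorem muFin_lt_iff {b : Set FinPos} {r : ℝ≥0∞} :
    muFin μ b < r ↔ ∃ a, Hits b a ∧ μ a < r := by
  simp only [muFin, iInf_lt_iff, exists_prop]
  rfl

theorem muFin_empty (h0 : μ ∅ = 0) : muFin μ ∅ = 0 :=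
  nonpos_iff_eq_zero.mp (h0 ▸ muFin_le fun _ hx => absurd hx (Set.notMem_empty _))

theorem muFin_mono : Monotone (muFin μ) :=
  fun _ _ hbc => le_iInf₂ fun _ ha => muFin_le fun x hx => ha x (hbc hx)

theorem muFin_union_le (hsub : ∀ a b : Set ℕ, μ (a ∪ b) ≤ μ a + μ b) (b b' : Set FinPos) :
    muFin μ (b ∪ b') ≤ muFin μ b + muFin μ b' :=
  ENNReal.le_iInf₂_add_iInf₂ fun a ha a' ha' => (muFin_le (Hits.union ha ha')).trans (hsub a a')

theorem muFin_lt_top_iff {b : Set FinPos} : muFin μ b < ⊤ ↔ ∃ a, μ a < ⊤ ∧ Hits b a := by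
  simp only [muFin_lt_iff, and_comm]

theorem muFin_le_iSup_finset (hmono : Monotone μ)
    (hlsc : ∀ a : Set ℕ, μ a ≤ ⨆ (c : Finset ℕ) (_ : ↑c ⊆ a), μ ↑c) (b : Set FinPos) :
    muFin μ b ≤ ⨆ (c : Finset FinPos) (_ : ↑c ⊆ b), muFin μ ↑c := by
  refine le_of_forall_gt_imp_ge_of_dense fun r hr => ?_
  have hfin (d : Finset FinPos) (hd : ↑d ⊆ b) : ∃ K : Selector, μ (K.img d) < r := by
    obtain ⟨a, ha, hμa⟩ := muFin_lt_iff.mp ((le_iSup₂_of_le d hd le_rfl).trans_lt hr)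
    obtain ⟨K, hK⟩ := ha.exists_img_subset
    exact ⟨K, (hmono hK).trans_lt hμa⟩
  obtain ⟨K, hK⟩ := Selector.exists_forall_finset (P := fun s => μ s < r)
    (fun s t hst ht => (hmono hst).trans_lt ht) hfin
  refine (muFin_le (K.hits_img b)).trans ((hlsc _).trans (iSup₂_le fun e he => ?_))
  classical
  obtain ⟨d, hd, rfl⟩ := Finset.subset_set_image_iff.mp he
  exact (hK d hd).le.trans_eq' (by simp [Selector.img])

end muFin

/-- If `μ` is a lower semicontinuous submeasure on `ω` then `μ^{<ω}` is a lower
semicontinuous submeasure on `[ω]^{<ω} ∖ {∅}`, and its finite sets form exactly the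
ideal `J^{<ω}` where `J = {a : μ(a) < ∞}`. -/
theorem muFin_lsc_submeasure
    (μ : Set ℕ → ℝ≥0∞)
    (h0 : μ ∅ = 0)
    (hmono : ∀ a b : Set ℕ, a ⊆ b → μ a ≤ μ b)
    (hsub : ∀ a b : Set ℕ, μ (a ∪ b) ≤ μ a + μ b)
    (hlsc : ∀ a : Set ℕ, μ a = ⨆ (c : Finset ℕ) (_ : ↑c ⊆ a), μ ↑c) :
    muFin μ ∅ = 0 ∧
    (∀ a b : Set FinPos, a ⊆ b → muFin μ a ≤ muFin μ b) ∧
    (∀ a b : Set FinPos, muFin μ (a ∪ b) ≤ muFin μ a + muFin μ b) ∧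
    (∀ b : Set FinPos, muFin μ b = ⨆ (c : Finset FinPos) (_ : ↑c ⊆ b), muFin μ ↑c) ∧
    {b : Set FinPos | muFin μ b < ⊤} =
      {b : Set FinPos | ∃ a : Set ℕ, μ a < ⊤ ∧ ∀ x ∈ b, ∃ k ∈ (x : FinPos).1, k ∈ a} :=
  ⟨muFin_empty h0, fun _ _ h => muFin_mono h, muFin_union_le hsub,
    fun b => le_antisymm (muFin_le_iSup_finset hmono (fun a => (hlsc a).le) b)
      (iSup₂_le fun _ hc => muFin_mono hc),
    Set.ext fun _ => muFin_lt_top_iff⟩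
end

section
/- If J is an F_σ ideal on ω containing all finite sets (where subsets of ω are identified with their characteristic functions in the Cantor space 2^ω), then J^{<ω} is an F_σ subset of the space P([ω]^{<ω}∖{∅}) of all subsets of the countable set [ω]^{<ω}∖{∅}, with its natural Cantor-space topology. -/
open Set

/-- If `J` is an `F_σ` ideal on `ω` containing all finite sets (subsets of `ω` being
identified with their characteristic functions in `2^ω`), then the ideal `J^{<ω}` on
`[ω]^{<ω} ∖ {∅}` is an `F_σ` subset of the Cantor space `P([ω]^{<ω} ∖ {∅})`. -/
theorem JFin_Fsigma
    (J : Set (ℕ → Bool))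
    (hJ_down : ∀ x y : ℕ → Bool, (∀ k, x k = true → y k = true) → y ∈ J → x ∈ J)
    (hJ_union : ∀ x ∈ J, ∀ y ∈ J, (fun k => x k || y k) ∈ J)
    (hJ_fin : ∀ x : ℕ → Bool, {k | x k = true}.Finite → x ∈ J)
    (hJ_Fσ : ∃ F : ℕ → Set (ℕ → Bool), (∀ n, IsClosed (F n)) ∧ J = ⋃ n, F n) :
    ∃ G : ℕ → Set (FinPos → Bool), (∀ n, IsClosed (G n)) ∧
      {b : FinPos → Bool | ∃ j ∈ J, ∀ x : FinPos, b x = true → ∃ k ∈ x.1, j k = true}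
        = ⋃ n, G n := by
  obtain ⟨F, hFc, hFJ⟩ := hJ_Fσ
  -- the "covering" relation, as a closed subset of the compact product space
  set C : Set ((ℕ → Bool) × (FinPos → Bool)) :=
    {p | ∀ x : FinPos, p.2 x = true → ∃ k ∈ x.1, p.1 k = true} with hC
  have hCclosed : IsClosed C := by
    have hrw : C = ⋂ x : FinPos, ({p : (ℕ → Bool) × (FinPos → Bool) | p.2 x = false}
        ∪ ⋃ k ∈ x.1, {p : (ℕ → Bool) × (FinPos → Bool) | p.1 k = true}) := by
      ext p
      simp only [hC, mem_setOf_eq, mem_iInter, mem_union, mem_iUnion]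
      refine forall_congr' fun x => ?_
      constructor
      · intro h
        cases hb : p.2 x with
        | false => exact Or.inl rfl
        | true =>
          obtain ⟨k, hk, hjk⟩ := h hb
          exact Or.inr ⟨k, hk, hjk⟩
      · rintro (h | ⟨k, hk, hjk⟩) hb
        · rw [h] at hb; exact absurd hb (by simp)
        · exact ⟨k, hk, hjk⟩
    rw [hrw]
    refine isClosed_iInter fun x => IsClosed.union ?_ ?_
    · exact isClosed_eq ((continuous_apply x).comp continuous_snd) continuous_const
    · refine (x.1.finite_toSet).isClosed_biUnion fun k _ => ?_
      exact isClosed_eq ((continuous_apply k).comp continuous_fst) continuous_const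
  refine ⟨fun n => Prod.snd '' ((F n ×ˢ (univ : Set (FinPos → Bool))) ∩ C), fun n => ?_, ?_⟩
  · have hclosed : IsClosed ((F n ×ˢ (univ : Set (FinPos → Bool))) ∩ C) :=
      ((hFc n).prod isClosed_univ).inter hCclosed
    exact (hclosed.isCompact.image continuous_snd).isClosed
  · ext b
    constructor
    · rintro ⟨j, hjJ, hcov⟩
      rw [hFJ] at hjJ
      obtain ⟨n, hjn⟩ := mem_iUnion.1 hjJ
      exact mem_iUnion.2 ⟨n, ⟨(j, b), ⟨⟨hjn, mem_univ _⟩, hcov⟩, rfl⟩⟩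
    · intro hb
      obtain ⟨n, ⟨j, b'⟩, ⟨⟨hjn, -⟩, hcov⟩, rfl⟩ := mem_iUnion.1 hb
      exact ⟨j, hFJ ▸ mem_iUnion.2 ⟨n, hjn⟩, hcov⟩
end

section
/- Let J and K be ideals on ω with K containing all finite sets, and let f : ω → ω be a function such that for every a ⊆ ω, a ∈ K if and only if f^{-1}(a) ∈ J (that is, f is a Rudin–Keisler reduction of K to J). If x ⊆ ω separates J, then the image f''x = {f(k) : k ∈ x} separates K. -/
open Set

/-- `x` separates the ideal `K`: `x ∩ b` is finite for every `b ∈ K` and infinite for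
every `b ∉ K`. -/
def Separates (x : Set ℕ) (K : Set (Set ℕ)) : Prop :=
  (∀ b ∈ K, (x ∩ b).Finite) ∧ (∀ b : Set ℕ, b ∉ K → (x ∩ b).Infinite)

/-- If `f` is a Rudin–Keisler reduction of the ideal `K` to the ideal `J` (where `K`
contains all finite sets) and `x` separates `J`, then `f '' x` separates `K`. -/
theorem image_separates
    (J K : Set (Set ℕ))
    (hJ_mono : ∀ s t : Set ℕ, s ⊆ t → t ∈ J → s ∈ J)
    (hJ_union : ∀ s ∈ J, ∀ t ∈ J, s ∪ t ∈ J)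
    (hK_mono : ∀ s t : Set ℕ, s ⊆ t → t ∈ K → s ∈ K)
    (hK_union : ∀ s ∈ K, ∀ t ∈ K, s ∪ t ∈ K)
    (hK_fin : ∀ s : Set ℕ, s.Finite → s ∈ K)
    (f : ℕ → ℕ) (hf : ∀ a : Set ℕ, a ∈ K ↔ f ⁻¹' a ∈ J)
    (x : Set ℕ) (hx : Separates x J) :
    Separates (f '' x) K := by
  obtain ⟨hx1, hx2⟩ := hx
  constructor
  · intro b hb
    have h1 : f ⁻¹' b ∈ J := (hf b).mp hb
    have h2 : (x ∩ f ⁻¹' b).Finite := hx1 _ h1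
    have hsub : f '' x ∩ b ⊆ f '' (x ∩ f ⁻¹' b) := by
      rintro y ⟨⟨k, hk, rfl⟩, hyb⟩
      exact ⟨k, ⟨hk, hyb⟩, rfl⟩
    exact (h2.image f).subset hsub
  · intro b hb
    intro hfin
    have hmem : f '' x ∩ b ∈ K := hK_fin _ hfin
    have h1 : f ⁻¹' (f '' x ∩ b) ∈ J := (hf _).mp hmem
    have h2 : (x ∩ f ⁻¹' (f '' x ∩ b)).Finite := hx1 _ h1
    have h3 : x ∩ f ⁻¹' b ⊆ x ∩ f ⁻¹' (f '' x ∩ b) := by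
      rintro k ⟨hkx, hkb⟩
      exact ⟨hkx, ⟨k, hkx, rfl⟩, hkb⟩
    have h4 : f ⁻¹' b ∉ J := fun h => hb ((hf b).mpr h)
    exact hx2 _ h4 (h2.subset h3)
end
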